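/- arXiv:0807.3106 — 7 statements merged into one kernel-verified Lean document; each statement's English description precedes it below -/
import Mathlib

section
/- Fix n ∈ ℕ and t > 0. For ε > 0 let Q^{(ε,n)} denote the product measure on ℝ^{2^n} of 2^n independent copies of the Gaussian measure N(0, εt/2^n) on ℝ, and let Λ*(x) = (2^n/(2t))·Σ_{j=1}^{2^n} x_j² for x ∈ ℝ^{2^n}. Then for every open set G ⊆ ℝ^{2^n}, liminf_{ε→0⁺} ε·log Q^{(ε,n)}(G) ≥ −inf_{x∈G} Λ*(x). -/
/-!
Around any point `x` of the open set `G` there is a ball `B(x, δ) ⊆ G`, and on the `j`-th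
coordinate interval of that ball the centred Gaussian density of variance `v = εt/2ⁿ` is at least
its value at distance `|x j| + δ`. Taking logarithms of the product of these bounds,
`ε log Q^{(ε,n)}(G) ≥ 2ⁿ ε log(2δ) - 2ⁿ/2 · ε log(2πεt/2ⁿ) - (2ⁿ/2t) ∑ⱼ (|x j| + δ)²`,
and the first two terms vanish as `ε → 0⁺` since `ε log ε → 0`. Letting `δ → 0` gives `-Λ*(x)`.
-/

open MeasureTheory ProbabilityTheory Filter

open Real Metric Topology NNReal

theorem Real.tendsto_mul_log_const_mul_nhdsGT_zero (c : ℝ) :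
    Tendsto (fun ε : ℝ => ε * log (c * ε)) (𝓝[>] 0) (𝓝 0) := by
  rcases eq_or_ne c 0 with rfl | hc
  · simp
  have hlim := (((continuous_mul_log.comp (continuous_const_mul c)).div_const c).tendsto 0)
    |>.mono_left (nhdsWithin_le_nhds (s := Set.Ioi 0))
  simp only [Function.comp_apply, mul_zero, zero_mul, zero_div] at hlim
  exact hlim.congr fun ε => by field_simp

theorem ProbabilityTheory.log_gaussianPDFReal (μ : ℝ) {v : ℝ≥0} (hv : v ≠ 0) (x : ℝ) :
    log (gaussianPDFReal μ v x) = -log (2 * π * v) / 2 - (x - μ) ^ 2 / (2 * v) := by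
  have : 0 < 2 * π * v := by positivity
  rw [gaussianPDFReal, log_mul (by positivity) (exp_pos _).ne', log_inv, log_sqrt this.le, log_exp]
  ring

theorem ProbabilityTheory.gaussianPDFReal_le_of_abs_sub_le (μ : ℝ) (v : ℝ≥0) {x y : ℝ}
    (h : |y - μ| ≤ |x - μ|) : gaussianPDFReal μ v x ≤ gaussianPDFReal μ v y := by
  rw [gaussianPDFReal, gaussianPDFReal]
  gcongr _ * exp (-?_ / _)
  exact sq_le_sq.2 h

theorem ProbabilityTheory.ofReal_mul_gaussianPDFReal_le_gaussianReal_ball (μ : ℝ) {v : ℝ≥0}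
    (hv : v ≠ 0) (a : ℝ) {δ : ℝ} (hδ : 0 < δ) :
    ENNReal.ofReal (2 * δ * gaussianPDFReal μ v (μ + (|a - μ| + δ))) ≤
      gaussianReal μ v (ball a δ) := by
  have hpdf : ∀ y ∈ ball a δ,
      ENNReal.ofReal (gaussianPDFReal μ v (μ + (|a - μ| + δ))) ≤ gaussianPDF μ v y := by
    intro y hy
    refine ENNReal.ofReal_le_ofReal (gaussianPDFReal_le_of_abs_sub_le μ v ?_)
    rw [add_sub_cancel_left, abs_of_pos (add_pos_of_nonneg_of_pos (abs_nonneg _) hδ)]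
    calc |y - μ| ≤ |y - a| + |a - μ| := abs_sub_le y a μ
      _ ≤ |a - μ| + δ := by rw [← Real.dist_eq] at *; linarith [mem_ball.1 hy]
  calc ENNReal.ofReal (2 * δ * gaussianPDFReal μ v (μ + (|a - μ| + δ)))
      = ∫⁻ _ in ball a δ, ENNReal.ofReal (gaussianPDFReal μ v (μ + (|a - μ| + δ))) := by
        rw [setLIntegral_const, Real.volume_ball,
          ← ENNReal.ofReal_mul (gaussianPDFReal_nonneg ..), mul_comm]
    _ ≤ ∫⁻ y in ball a δ, gaussianPDF μ v y :=
        setLIntegral_mono (measurable_gaussianPDF μ v) hpdf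
    _ = gaussianReal μ v (ball a δ) := (gaussianReal_apply μ hv _).symm

theorem ProbabilityTheory.log_measure_pi_gaussianReal_ge {ι : Type*} [Fintype ι] (μ : ι → ℝ)
    {v : ℝ≥0} (hv : v ≠ 0) {x : ι → ℝ} {δ : ℝ} (hδ : 0 < δ) {S : Set (ι → ℝ)}
    (hS : ball x δ ⊆ S) :
    Fintype.card ι * (log (2 * δ) - log (2 * π * v) / 2) -
        (∑ j, (|x j - μ j| + δ) ^ 2) / (2 * v) ≤
      log ((Measure.pi fun j => gaussianReal (μ j) v) S).toReal := by
  set c : ι → ℝ := fun j => 2 * δ * gaussianPDFReal (μ j) v (μ j + (|x j - μ j| + δ))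
  have hc : ∀ j, 0 < c j := fun j => mul_pos (by linarith) (gaussianPDFReal_pos _ _ _ hv)
  have hlog : ∀ j, log (c j) =
      log (2 * δ) - log (2 * π * v) / 2 - (|x j - μ j| + δ) ^ 2 / (2 * v) := by
    intro j
    rw [log_mul (by linarith) (gaussianPDFReal_pos _ _ _ hv).ne', log_gaussianPDFReal _ hv,
      add_sub_cancel_left]
    ring
  have hmeas : ENNReal.ofReal (∏ j, c j) ≤ (Measure.pi fun j => gaussianReal (μ j) v) S :=
    calc ENNReal.ofReal (∏ j, c j) = ∏ j, ENNReal.ofReal (c j) :=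
          ENNReal.ofReal_prod_of_nonneg fun j _ => (hc j).le
      _ ≤ ∏ j, gaussianReal (μ j) v (ball (x j) δ) := Finset.prod_le_prod' fun j _ =>
          ofReal_mul_gaussianPDFReal_le_gaussianReal_ball (μ j) hv (x j) hδ
      _ = (Measure.pi fun j => gaussianReal (μ j) v) (ball x δ) := by
          rw [ball_pi x hδ, Measure.pi_pi]
      _ ≤ _ := measure_mono hS
  calc _ = ∑ j, log (c j) := by
        rw [Finset.sum_congr rfl fun j _ => hlog j, Finset.sum_sub_distrib, Finset.sum_const,
          Finset.card_univ, nsmul_eq_mul, Finset.sum_div]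
    _ = log (∏ j, c j) := (log_prod fun j _ => (hc j).ne').symm
    _ ≤ _ := log_le_log (Finset.prod_pos fun j _ => hc j)
        ((ENNReal.ofReal_le_iff_le_toReal (measure_ne_top _ _)).1 hmeas)

theorem ProbabilityTheory.le_liminf_mul_log_measure_pi_gaussianReal {ι : Type*} [Fintype ι]
    (μ : ι → ℝ) {s : ℝ} (hs : 0 < s) {x : ι → ℝ} {δ : ℝ} (hδ : 0 < δ) {S : Set (ι → ℝ)}
    (hS : ball x δ ⊆ S) :
    -(∑ j, (|x j - μ j| + δ) ^ 2) / (2 * s) ≤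
      liminf (fun ε =>
        ε * log ((Measure.pi fun j => gaussianReal (μ j) (ε * s).toNNReal) S).toReal) (𝓝[>] 0) := by
  set K := ∑ j, (|x j - μ j| + δ) ^ 2
  set d := (Fintype.card ι : ℝ)
  set F : ℝ → ℝ := fun ε =>
    ε * (d * log (2 * δ)) - d / 2 * (ε * log (2 * π * s * ε)) - K / (2 * s)
  have hF : Tendsto F (𝓝[>] 0) (𝓝 (-K / (2 * s))) := by
    have := ((tendsto_id.mono_left nhdsWithin_le_nhds).mul_const (d * log (2 * δ))).sub
      ((tendsto_mul_log_const_mul_nhdsGT_zero (2 * π * s)).const_mul (d / 2)) |>.sub_const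
      (K / (2 * s))
    simpa [neg_div] using this
  have hFu : ∀ᶠ ε in 𝓝[>] 0, F ε ≤
      ε * log ((Measure.pi fun j => gaussianReal (μ j) (ε * s).toNNReal) S).toReal := by
    filter_upwards [self_mem_nhdsWithin] with ε (hε : 0 < ε)
    have hv : ((ε * s).toNNReal : ℝ) = ε * s := Real.coe_toNNReal _ (mul_pos hε hs).le
    have := mul_le_mul_of_nonneg_left (log_measure_pi_gaussianReal_ge μ
      (Real.toNNReal_pos.2 (mul_pos hε hs)).ne' hδ hS) hε.le
    rw [hv] at this
    refine le_trans (le_of_eq ?_) this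
    simp only [F, d, K, show 2 * π * s * ε = 2 * π * (ε * s) by ring]
    field_simp
  have hu : ∀ᶠ ε in 𝓝[>] 0,
      ε * log ((Measure.pi fun j => gaussianReal (μ j) (ε * s).toNNReal) S).toReal ≤ 0 := by
    filter_upwards [self_mem_nhdsWithin] with ε (hε : 0 < ε)
    exact mul_nonpos_of_nonneg_of_nonpos hε.le (log_nonpos ENNReal.toReal_nonneg
      (ENNReal.toReal_le_of_le_ofReal zero_le_one (by simpa using prob_le_one)))
  calc -K / (2 * s) = liminf F (𝓝[>] 0) := hF.liminf_eq.symm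
    _ ≤ _ := liminf_le_liminf hFu hF.isBoundedUnder_ge (isCoboundedUnder_ge_of_eventually_le _ hu)

/-- **Gärtner–Ellis lower bound** (special Gaussian case).
For the product of `2^n` i.i.d. Gaussian measures `N(0, ε t / 2^n)` on `ℝ^{2^n}` and the
rate function `Λ*(x) = (2^n/(2t)) ∑ x_j²`, for every open set `G`,
`liminf_{ε→0⁺} ε log Q^{(ε,n)}(G) ≥ − inf_{x ∈ G} Λ*(x)`. -/
theorem gaertner_ellis_lower_bound (n : ℕ) (t : ℝ) (ht : 0 < t)
    (Q : ℝ → Measure (Fin (2 ^ n) → ℝ))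
    (hQ : ∀ ε, 0 < ε → Q ε = Measure.pi fun _ : Fin (2 ^ n) =>
      gaussianReal 0 (Real.toNNReal (ε * t / 2 ^ n)))
    (Λstar : (Fin (2 ^ n) → ℝ) → ℝ)
    (hΛ : ∀ x, Λstar x = (2 ^ n / (2 * t)) * ∑ j, (x j) ^ 2)
    (G : Set (Fin (2 ^ n) → ℝ)) (hG : IsOpen G) :
    - sInf (Λstar '' G) ≤
      liminf (fun ε => ε * Real.log ((Q ε G).toReal)) (nhdsWithin 0 (Set.Ioi 0)) := by
  rcases G.eq_empty_or_nonempty with rfl | hGne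
  · simp -- `sInf ∅ = 0` and `log 0 = 0`
  rw [neg_le]
  refine le_csInf (hGne.image _) ?_
  rintro _ ⟨x, hxG, rfl⟩
  obtain ⟨δ₀, hδ₀, hball⟩ := Metric.isOpen_iff.1 hG x hxG
  have hrate : Tendsto (fun δ => -(∑ j, (|x j - 0| + δ) ^ 2) / (2 * (t / 2 ^ n))) (𝓝[>] 0)
      (𝓝 (-Λstar x)) := by
    refine (Continuous.tendsto' (by fun_prop) 0 _ ?_).mono_left nhdsWithin_le_nhds
    simp only [hΛ, sub_zero, add_zero, sq_abs]
    field_simp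
  have hQG : (fun ε => ε * log (Q ε G).toReal) =ᶠ[𝓝[>] 0]
      fun ε =>
        ε * log ((Measure.pi fun _ => gaussianReal 0 (ε * (t / 2 ^ n)).toNNReal) G).toReal := by
    filter_upwards [self_mem_nhdsWithin] with ε (hε : 0 < ε)
    rw [hQ ε hε, mul_div_assoc]
  rw [neg_le, liminf_congr hQG]
  refine le_of_tendsto hrate ?_
  filter_upwards [Ioo_mem_nhdsGT hδ₀] with δ hδ
  exact le_liminf_mul_log_measure_pi_gaussianReal (fun _ => 0) (by positivity) hδ.1
    ((ball_subset_ball hδ.2.le).trans hball)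
end

section
/- Fix n ∈ ℕ, t > 0 and x ∈ ℝ. Let V : ℝ × ℝ → ℝ be smooth and bounded and φ : ℝ → ℝ be bounded and Lipschitz. For z ∈ ℝ^{2^n} define the piecewise linear path Y^{(n)}(s,z) = x + Σ_{j=1}^{k(s)} z_j + (2^n s/t − k(s))·z_{k(s)+1} for 0 ≤ s ≤ t, where k(s) = ⌊2^n s/t⌋, define Ã^{(n)}(z) = (2^{n−1}/t)·Σ_{j=1}^{2^n} z_j² + φ(Y^{(n)}(t,z)) + ∫_0^t V(t−s, Y^{(n)}(s,z)) ds, and define U^{(ε,n)}(t,x) = ∫_{ℝ^{2^n}} exp(−(1/ε)(φ(Y^{(n)}(t,z)) + ∫_0^t V(t−s, Y^{(n)}(s,z)) ds)) dQ^{(ε,n)}(z), where Q^{(ε,n)} is the product on ℝ^{2^n} of 2^n copies of the Gaussian measure N(0, εt/2^n). Then lim_{ε→0⁺} −ε·log U^{(ε,n)}(t,x) = inf_{z ∈ ℝ^{2^n}} Ã^{(n)}(z). -/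
open MeasureTheory ProbabilityTheory Filter

open scoped ENNReal NNReal


theorem aux_lintegral_pi_prod {m : ℕ} (f : Fin m → ℝ → ℝ≥0∞) (hf : ∀ i, Measurable (f i)) :
    ∫⁻ z : Fin m → ℝ, ∏ i, f i (z i) ∂(Measure.pi fun _ => (volume : Measure ℝ))
      = ∏ i, ∫⁻ y, f i y := by
  induction m with
  | zero => simp [lintegral_const, Measure.pi_univ]
  | succ m ih =>
    have h := ((measurePreserving_piFinSuccAbove (fun _ : Fin (m+1) => (volume : Measure ℝ)) 0).symm)
    rw [← h.lintegral_comp_emb (MeasurableEquiv.measurableEmbedding _)]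
    simp_rw [MeasurableEquiv.piFinSuccAbove_symm_apply, Fin.insertNthEquiv,
      Fin.prod_univ_succ, Fin.insertNth_zero]
    simp only [Fin.zero_succAbove, cast_eq, Function.comp_def, Fin.cons_zero, Fin.cons_succ, Equiv.coe_fn_mk]
    rw [lintegral_prod_mul (f := f 0) (g := fun w : Fin m → ℝ => ∏ x, f x.succ (w x))
      (hf 0).aemeasurable
      (Finset.measurable_prod Finset.univ fun i _ =>
        (hf i.succ).comp (measurable_pi_apply i)).aemeasurable]
    rw [ih (fun i => f i.succ) (fun i => hf i.succ)]

theorem aux_pi_gaussian (m : ℕ) (v : ℝ≥0) (hv : v ≠ 0) :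
    (Measure.pi fun _ : Fin m => gaussianReal 0 v)
      = (Measure.pi fun _ : Fin m => (volume : Measure ℝ)).withDensity
          (fun z => ∏ i, gaussianPDF 0 v (z i)) := by
  refine Measure.pi_eq fun s hs => ?_
  rw [withDensity_apply _ (MeasurableSet.univ_pi hs), ← lintegral_indicator
    (MeasurableSet.univ_pi hs)]
  have hind : (Set.univ.pi s).indicator (fun z : Fin m → ℝ => ∏ i, gaussianPDF 0 v (z i))
      = fun z => ∏ i, (s i).indicator (gaussianPDF 0 v) (z i) := by
    funext z
    by_cases hz : z ∈ Set.univ.pi s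
    · rw [Set.indicator_of_mem hz]
      exact Finset.prod_congr rfl fun i _ =>
        (Set.indicator_of_mem (hz i (Set.mem_univ i)) _).symm
    · rw [Set.indicator_of_notMem hz]
      obtain ⟨i, hi⟩ := not_forall.mp (Set.mem_univ_pi.not.mp hz)
      exact (Finset.prod_eq_zero (Finset.mem_univ i)
        (by rw [Set.indicator_of_notMem hi])).symm
  rw [hind, aux_lintegral_pi_prod _ fun i => (measurable_gaussianPDF 0 v).indicator (hs i)]
  exact Finset.prod_congr rfl fun i _ => by
    rw [lintegral_indicator (hs i), ← gaussianReal_apply 0 hv (s i)]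

theorem aux_integral_pi_gaussian (m : ℕ) (v : ℝ≥0) (hv : v ≠ 0) (h : (Fin m → ℝ) → ℝ) :
    ∫ z, h z ∂(Measure.pi fun _ : Fin m => gaussianReal 0 v)
      = ∫ z, (∏ i, gaussianPDFReal 0 v (z i)) * h z
          ∂(Measure.pi fun _ : Fin m => (volume : Measure ℝ)) := by
  rw [aux_pi_gaussian m v hv]
  have hd : (fun z : Fin m → ℝ => ∏ i, gaussianPDF 0 v (z i))
      = fun z => ((∏ i, (gaussianPDFReal 0 v (z i)).toNNReal : ℝ≥0) : ℝ≥0∞) := by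
    funext z; rw [ENNReal.coe_finset_prod]; rfl
  have hmeas : Measurable fun z : Fin m → ℝ => ∏ i, (gaussianPDFReal 0 v (z i)).toNNReal := by
    refine Finset.measurable_prod Finset.univ fun i _ => Measurable.real_toNNReal ?_
    exact (measurable_gaussianPDFReal 0 v).comp (measurable_pi_apply i)
  rw [hd, integral_withDensity_eq_integral_smul hmeas h]
  refine integral_congr_ae (Eventually.of_forall fun z => ?_)
  simp only [NNReal.smul_def, NNReal.coe_prod]
  congr 1
  exact Finset.prod_congr rfl fun i _ =>
    Real.coe_toNNReal _ (gaussianPDFReal_nonneg 0 v (z i))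

theorem aux_exp_int {N : ℕ} {b : ℝ} (hb : 0 < b) :
    Integrable (fun z : Fin N → ℝ => Real.exp (-b * ∑ j, z j ^ 2))
      (Measure.pi fun _ : Fin N => (volume : Measure ℝ)) := by
  have h : (fun z : Fin N → ℝ => Real.exp (-b * ∑ j, z j ^ 2))
      = fun z => ∏ j, Real.exp (-b * z j ^ 2) := by
    funext z; rw [Finset.mul_sum, Real.exp_sum]
  rw [h, ← volume_pi]
  exact Integrable.fintype_prod fun _ => integrable_exp_neg_mul_sq hb

theorem aux_A_int {N : ℕ} {A : (Fin N → ℝ) → ℝ} (hAc : Continuous A)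
    {c M : ℝ} (hc : 0 < c)
    (hlow : ∀ z, c * (∑ j, z j ^ 2) - M ≤ A z) {ε : ℝ} (hε : 0 < ε) :
    Integrable (fun z : Fin N → ℝ => Real.exp (-A z / ε))
      (Measure.pi fun _ : Fin N => (volume : Measure ℝ)) := by
  refine Integrable.mono' ((aux_exp_int (div_pos hc hε)).const_mul (Real.exp (M / ε)))
    ((hAc.neg.div_const ε).rexp.aestronglyMeasurable) (Eventually.of_forall fun z => ?_)
  rw [Real.norm_eq_abs, abs_of_pos (Real.exp_pos _), ← Real.exp_add]
  refine Real.exp_le_exp.2 ?_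
  have h1 := hlow z
  rw [div_le_iff₀ hε]
  field_simp
  nlinarith

theorem aux_int_pos {N : ℕ} {f : (Fin N → ℝ) → ℝ}
    (hf : Integrable f (Measure.pi fun _ : Fin N => (volume : Measure ℝ)))
    (hpos : ∀ z, 0 < f z) :
    0 < ∫ z, f z ∂(Measure.pi fun _ : Fin N => (volume : Measure ℝ)) := by
  rw [integral_pos_iff_support_of_nonneg (fun z => (hpos z).le) hf]
  have h : Function.support f = Set.univ := Set.eq_univ_of_forall fun z => (hpos z).ne'
  rw [h, Measure.pi_univ]
  refine CanonicallyOrderedAdd.prod_pos.mpr fun i _ => ?_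
  simp [Real.volume_univ]


theorem aux_laplace {N : ℕ} (A : (Fin N → ℝ) → ℝ) (hAc : Continuous A)
    (c M : ℝ) (hc : 0 < c)
    (hlow : ∀ z, c * (∑ j, z j ^ 2) - M ≤ A z) :
    Tendsto (fun ε : ℝ => -ε * Real.log (∫ z, Real.exp (-A z / ε)
        ∂(Measure.pi fun _ : Fin N => (volume : Measure ℝ))))
      (nhdsWithin 0 (Set.Ioi 0)) (nhds (⨅ z, A z)) := by
  set μ := Measure.pi fun _ : Fin N => (volume : Measure ℝ) with hμ
  set I : ℝ → ℝ := fun ε => ∫ z, Real.exp (-A z / ε) ∂μ with hIdef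
  have hS : ∀ z : Fin N → ℝ, (0:ℝ) ≤ ∑ j, z j ^ 2 :=
    fun z => Finset.sum_nonneg fun j _ => sq_nonneg _
  have hbdd : BddBelow (Set.range A) := by
    refine ⟨-M, ?_⟩
    rintro y ⟨z, rfl⟩
    have h1 := hlow z
    nlinarith [mul_nonneg hc.le (hS z)]
  set m := ⨅ z, A z with hm
  have hmle : ∀ z, m ≤ A z := fun z => ciInf_le hbdd z
  have hInt : ∀ ε : ℝ, 0 < ε → Integrable (fun z => Real.exp (-A z / ε)) μ :=
    fun ε hε => aux_A_int hAc hc hlow hε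
  -- lower bounds on I via balls
  have hballs : ∀ δ : ℝ, 0 < δ → ∃ v0 : ℝ, 0 < v0 ∧
      ∀ ε : ℝ, 0 < ε → Real.exp (-(m + δ) / ε) * v0 ≤ I ε := by
    intro δ hδ
    obtain ⟨z₀, hz₀⟩ := exists_lt_of_ciInf_lt (lt_add_of_pos_right m hδ)
    have ho : IsOpen {z : Fin N → ℝ | A z < m + δ} := isOpen_lt hAc continuous_const
    obtain ⟨r, hr, hball⟩ := Metric.isOpen_iff.mp ho z₀ hz₀
    refine ⟨(μ (Metric.ball z₀ r)).toReal, ?_, ?_⟩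
    · exact ENNReal.toReal_pos (Metric.measure_ball_pos μ z₀ hr).ne' measure_ball_lt_top.ne
    · intro ε hε
      have h1 : Real.exp (-(m + δ) / ε) * (μ (Metric.ball z₀ r)).toReal
          ≤ ∫ z in Metric.ball z₀ r, Real.exp (-A z / ε) ∂μ := by
        refine setIntegral_ge_of_const_le_real measurableSet_ball measure_ball_lt_top.ne
          (fun z hz => Real.exp_le_exp.2 ?_) ((hInt ε hε).integrableOn)
        have h2 : A z < m + δ := hball hz
        have := (div_le_div_iff_of_pos_right hε).2 (neg_le_neg h2.le)
        exact this
      exact h1.trans (setIntegral_le_integral (hInt ε hε)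
        (Eventually.of_forall fun z => (Real.exp_pos _).le))
  have hIpos : ∀ ε : ℝ, 0 < ε → 0 < I ε := by
    intro ε hε
    obtain ⟨v0, hv0, hb⟩ := hballs 1 one_pos
    exact lt_of_lt_of_le (by positivity) (hb ε hε)
  -- upper bound on I
  set K := ∫ z, Real.exp (m - A z) ∂μ with hK
  have hKint : Integrable (fun z => Real.exp (m - A z)) μ := by
    have h : (fun z => Real.exp (m - A z)) = fun z => Real.exp m * Real.exp (-A z / 1) := by
      funext z; rw [← Real.exp_add]; ring_nf
    rw [h]; exact (hInt 1 one_pos).const_mul _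
  have hKpos : 0 < K := aux_int_pos hKint fun z => Real.exp_pos _
  have hIK : ∀ ε : ℝ, ε ∈ Set.Ioc (0:ℝ) 1 → I ε ≤ Real.exp (-m / ε) * K := by
    intro ε hε
    calc I ε ≤ ∫ z, Real.exp (-m / ε) * Real.exp (m - A z) ∂μ := by
          refine integral_mono (hInt ε hε.1) ((hKint).const_mul _) fun z => ?_
          rw [← Real.exp_add]
          refine Real.exp_le_exp.2 ?_
          have key : (m - A z) / ε ≤ m - A z := by
            rw [div_le_iff₀ hε.1]
            nlinarith [hmle z, hε.2, hε.1]
          have e1 : (m - A z) / ε = m / ε - A z / ε := sub_div _ _ _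
          have e2 : -A z / ε = -(A z / ε) := neg_div _ _
          have e3 : -m / ε = -(m / ε) := neg_div _ _
          linarith
      _ = Real.exp (-m / ε) * K := integral_const_mul _ _
  -- conclusion
  refine tendsto_order.2 ⟨fun a ha => ?_, fun b hb => ?_⟩
  · have h1 : ∀ᶠ ε in nhdsWithin (0:ℝ) (Set.Ioi 0), ε ∈ Set.Ioc (0:ℝ) 1 :=
      Ioc_mem_nhdsGT_of_mem (by norm_num)
    have hcont : Tendsto (fun ε : ℝ => m - ε * Real.log K) (nhdsWithin 0 (Set.Ioi 0))
        (nhds m) := by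
      have h2 : Continuous fun ε : ℝ => m - ε * Real.log K := by continuity
      have h3 := h2.tendsto 0
      simp only [zero_mul, sub_zero] at h3
      exact h3.mono_left nhdsWithin_le_nhds
    filter_upwards [h1, (tendsto_order.1 hcont).1 a ha] with ε hε hlt
    have hε0 : 0 < ε := hε.1
    have hlog : Real.log (I ε) ≤ -m / ε + Real.log K := by
      calc Real.log (I ε) ≤ Real.log (Real.exp (-m / ε) * K) :=
            Real.log_le_log (hIpos ε hε0) (hIK ε hε)
        _ = -m / ε + Real.log K := by
            rw [Real.log_mul (Real.exp_ne_zero _) hKpos.ne', Real.log_exp]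
    have h3 : -ε * (-m / ε + Real.log K) ≤ -ε * Real.log (I ε) :=
      mul_le_mul_of_nonpos_left hlog (by linarith)
    have e : -ε * (-m / ε + Real.log K) = m - ε * Real.log K := by
      field_simp
      ring
    linarith
  · set δ := (b - m) / 2 with hδdef
    have hδ : 0 < δ := by simp only [hδdef]; linarith
    obtain ⟨v0, hv0, hbound⟩ := hballs δ hδ
    have hmb : m + δ < b := by simp only [hδdef]; linarith
    have hcont : Tendsto (fun ε : ℝ => m + δ - ε * Real.log v0) (nhdsWithin 0 (Set.Ioi 0))
        (nhds (m + δ)) := by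
      have h2 : Continuous fun ε : ℝ => m + δ - ε * Real.log v0 := by continuity
      have h3 := h2.tendsto 0
      simp only [zero_mul, sub_zero] at h3
      exact h3.mono_left nhdsWithin_le_nhds
    filter_upwards [self_mem_nhdsWithin, (tendsto_order.1 hcont).2 b hmb] with ε hε hlt
    have hε0 : 0 < ε := hε
    have hne := hbound ε hε0
    have hlog : -(m + δ) / ε + Real.log v0 ≤ Real.log (I ε) := by
      calc -(m + δ) / ε + Real.log v0 = Real.log (Real.exp (-(m + δ) / ε) * v0) := by
            rw [Real.log_mul (Real.exp_ne_zero _) hv0.ne', Real.log_exp]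
        _ ≤ Real.log (I ε) := Real.log_le_log (by positivity) hne
    have h3 : -ε * Real.log (I ε) ≤ -ε * (-(m + δ) / ε + Real.log v0) :=
      mul_le_mul_of_nonpos_left hlog (by linarith)
    have e : -ε * (-(m + δ) / ε + Real.log v0) = m + δ - ε * Real.log v0 := by
      field_simp
      ring
    linarith

/-- **Laplace method for the discretized Feynman–Kac integral.**
`Y^{(n)}(s,z)` is the piecewise linear path started at `x` with dyadic increments `z`,
`Ã^{(n)}(z)` is its action, and `U^{(ε,n)}(t,x)` is the Gaussian integral of
`exp(−(1/ε)(φ(Y(t,z)) + ∫₀ᵗ V(t−s, Y(s,z)) ds))`.  Then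
`lim_{ε→0⁺} −ε log U^{(ε,n)}(t,x) = inf_z Ã^{(n)}(z)`. -/
theorem laplace_method_discretized (n : ℕ) (t x : ℝ) (ht : 0 < t)
    (V : ℝ → ℝ → ℝ) (hV : ContDiff ℝ (⊤ : ℕ∞) fun p : ℝ × ℝ => V p.1 p.2)
    (hVbdd : ∃ C, ∀ s y, |V s y| ≤ C)
    (φ : ℝ → ℝ) (hφbdd : ∃ C, ∀ y, |φ y| ≤ C) (hφlip : ∃ L, LipschitzWith L φ)
    (Y : ℝ → (Fin (2 ^ n) → ℝ) → ℝ)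
    (hY : ∀ s z, Y s z =
      x + (∑ j ∈ Finset.range ⌊2 ^ n * s / t⌋₊, if h : j < 2 ^ n then z ⟨j, h⟩ else 0)
        + (2 ^ n * s / t - ⌊2 ^ n * s / t⌋₊) *
            (if h : ⌊2 ^ n * s / t⌋₊ < 2 ^ n then z ⟨⌊2 ^ n * s / t⌋₊, h⟩ else 0))
    (A : (Fin (2 ^ n) → ℝ) → ℝ)
    (hA : ∀ z, A z = (2 ^ n / (2 * t)) * (∑ j, (z j) ^ 2) + φ (Y t z)
        + ∫ s in (0:ℝ)..t, V (t - s) (Y s z))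
    (U : ℝ → ℝ)
    (hU : ∀ ε, U ε =
      ∫ z, Real.exp (-(1 / ε) * (φ (Y t z) + ∫ s in (0:ℝ)..t, V (t - s) (Y s z)))
        ∂(Measure.pi fun _ : Fin (2 ^ n) =>
            gaussianReal 0 (Real.toNNReal (ε * t / 2 ^ n)))) :
    Tendsto (fun ε => -ε * Real.log (U ε)) (nhdsWithin 0 (Set.Ioi 0))
      (nhds (⨅ z, A z)) := by
  obtain ⟨Cv, hCv⟩ := hVbdd
  obtain ⟨Cφ, hCφ⟩ := hφbdd
  obtain ⟨L, hL⟩ := hφlip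
  have hCv0 : 0 ≤ Cv := (abs_nonneg _).trans (hCv 0 0)
  have hCφ0 : 0 ≤ Cφ := (abs_nonneg _).trans (hCφ 0)
  have hc : (0:ℝ) < 2 ^ n / (2 * t) := by positivity
  -- continuity of Y in z
  have hYcont : ∀ s, Continuous fun z => Y s z := by
    intro s
    have h0 : (fun z => Y s z) = fun z : Fin (2 ^ n) → ℝ =>
        x + (∑ j ∈ Finset.range ⌊2 ^ n * s / t⌋₊, if h : j < 2 ^ n then z ⟨j, h⟩ else 0)
          + (2 ^ n * s / t - ⌊2 ^ n * s / t⌋₊) *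
              (if h : ⌊2 ^ n * s / t⌋₊ < 2 ^ n then z ⟨⌊2 ^ n * s / t⌋₊, h⟩ else 0) :=
      funext fun z => hY s z
    rw [h0]
    refine (continuous_const.add (continuous_finset_sum _ fun j _ => ?_)).add
      (continuous_const.mul ?_)
    · by_cases h : j < 2 ^ n
      · simp only [dif_pos h]; exact continuous_apply _
      · simp only [dif_neg h]; exact continuous_const
    · by_cases h : ⌊2 ^ n * s / t⌋₊ < 2 ^ n
      · simp only [dif_pos h]; exact continuous_apply _
      · simp only [dif_neg h]; exact continuous_const
  have hVc : Continuous fun p : ℝ × ℝ => V p.1 p.2 := hV.continuous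
  -- measurability of Y in s
  have hYmeas : ∀ z, Measurable fun s => Y s z := by
    intro z
    have h0 : (fun s => Y s z) = fun s : ℝ =>
        x + (∑ j ∈ Finset.range ⌊2 ^ n * s / t⌋₊, if h : j < 2 ^ n then z ⟨j, h⟩ else 0)
          + (2 ^ n * s / t - ⌊2 ^ n * s / t⌋₊) *
              (if h : ⌊2 ^ n * s / t⌋₊ < 2 ^ n then z ⟨⌊2 ^ n * s / t⌋₊, h⟩ else 0) :=
      funext fun s => hY s z
    rw [h0]
    have hk : Measurable fun s : ℝ => ⌊2 ^ n * s / t⌋₊ :=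
      ((measurable_const.mul measurable_id).div_const t).nat_floor
    have hg1 : Measurable fun s : ℝ =>
        (∑ j ∈ Finset.range ⌊2 ^ n * s / t⌋₊, if h : j < 2 ^ n then z ⟨j, h⟩ else 0) :=
      (measurable_from_nat
        (f := fun k : ℕ => ∑ j ∈ Finset.range k, if h : j < 2 ^ n then z ⟨j, h⟩ else 0)).comp hk
    have hg2 : Measurable fun s : ℝ =>
        (if h : ⌊2 ^ n * s / t⌋₊ < 2 ^ n then z ⟨⌊2 ^ n * s / t⌋₊, h⟩ else 0) :=
      (measurable_from_nat
        (f := fun k : ℕ => if h : k < 2 ^ n then z ⟨k, h⟩ else 0)).comp hk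
    have hfl : Measurable fun s : ℝ => ((⌊2 ^ n * s / t⌋₊ : ℕ) : ℝ) :=
      (measurable_from_nat (f := fun k : ℕ => (k : ℝ))).comp hk
    exact (measurable_const.add hg1).add
      ((((measurable_const.mul measurable_id).div_const t).sub hfl).mul hg2)
  have hVmeas : ∀ z, Measurable fun s => V (t - s) (Y s z) := fun z =>
    hVc.measurable.comp ((measurable_const.sub measurable_id).prodMk (hYmeas z))
  -- bound on the integral term
  have hIbd : ∀ z, |∫ s in (0:ℝ)..t, V (t - s) (Y s z)| ≤ Cv * t := by
    intro z
    have h := intervalIntegral.norm_integral_le_of_norm_le_const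
      (C := Cv) (f := fun s => V (t - s) (Y s z)) (a := 0) (b := t)
      (fun s _ => by simpa using hCv (t - s) (Y s z))
    simp only [sub_zero, Real.norm_eq_abs, abs_of_pos ht] at h
    exact h
  -- continuity of the integral term in z
  have hGcont : Continuous fun z : Fin (2 ^ n) → ℝ =>
      ∫ s in (0:ℝ)..t, V (t - s) (Y s z) := by
    have h1 : ∀ z : Fin (2 ^ n) → ℝ, (∫ s in (0:ℝ)..t, V (t - s) (Y s z))
        = ∫ s in Set.Ioc (0:ℝ) t, V (t - s) (Y s z) := fun z =>
      intervalIntegral.integral_of_le ht.le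
    simp only [h1]
    refine continuous_of_dominated (F := fun z s => V (t - s) (Y s z)) (bound := fun _ => Cv)
      (fun z => ((hVmeas z).aestronglyMeasurable).restrict)
      (fun z => Eventually.of_forall fun s => by simpa using hCv (t - s) (Y s z))
      ?_ (Eventually.of_forall fun s => hVc.comp (continuous_const.prodMk (hYcont s)))
    exact integrableOn_const measure_Ioc_lt_top.ne
  have hA' : ∀ z, A z = (2 ^ n / (2 * t)) * (∑ j, z j ^ 2)
      + (φ (Y t z) + ∫ s in (0:ℝ)..t, V (t - s) (Y s z)) := by
    intro z; rw [hA z]; ring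
  have hAc : Continuous A := by
    have h0 : A = fun z => (2 ^ n / (2 * t)) * (∑ j, z j ^ 2)
        + (φ (Y t z) + ∫ s in (0:ℝ)..t, V (t - s) (Y s z)) := funext hA'
    rw [h0]
    exact (continuous_const.mul
      (continuous_finset_sum _ fun j _ => (continuous_apply j).pow 2)).add
      ((hL.continuous.comp (hYcont t)).add hGcont)
  have hFbd : ∀ z, |φ (Y t z) + ∫ s in (0:ℝ)..t, V (t - s) (Y s z)| ≤ Cφ + Cv * t :=
    fun z => (abs_add_le _ _).trans (add_le_add (hCφ _) (hIbd z))
  have hlow : ∀ z, (2 ^ n / (2 * t)) * (∑ j, z j ^ 2) - (Cφ + Cv * t) ≤ A z := by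
    intro z
    rw [hA' z]
    have h1 := (abs_le.mp (hFbd z)).1
    linarith
  -- conversion for ε > 0
  have hconv : ∀ ε : ℝ, 0 < ε → U ε
      = ((Real.sqrt (2 * Real.pi * (ε * t / 2 ^ n)))⁻¹) ^ (2 ^ n)
        * ∫ z, Real.exp (-A z / ε)
            ∂(Measure.pi fun _ : Fin (2 ^ n) => (volume : Measure ℝ)) := by
    intro ε hε
    have hvpos : (0:ℝ) < ε * t / 2 ^ n := by positivity
    have hv0 : (Real.toNNReal (ε * t / 2 ^ n)) ≠ 0 := by
      rw [Ne, Real.toNNReal_eq_zero]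
      linarith
    have hvr : ((Real.toNNReal (ε * t / 2 ^ n)) : ℝ) = ε * t / 2 ^ n :=
      Real.coe_toNNReal _ hvpos.le
    rw [hU ε, aux_integral_pi_gaussian _ _ hv0, ← MeasureTheory.integral_const_mul]
    refine integral_congr_ae (Eventually.of_forall fun z => ?_)
    dsimp only
    have hprod : (∏ i, gaussianPDFReal 0 (Real.toNNReal (ε * t / 2 ^ n)) (z i))
        = ((Real.sqrt (2 * Real.pi * (ε * t / 2 ^ n)))⁻¹) ^ (2 ^ n)
          * Real.exp (∑ i, -(z i - 0) ^ 2 / (2 * (ε * t / 2 ^ n))) := by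
      simp only [gaussianPDFReal, hvr]
      rw [Finset.prod_mul_distrib, Finset.prod_const, Real.exp_sum]
      simp [Finset.card_univ]
    rw [hprod, mul_assoc, ← Real.exp_add]
    congr 1
    have e1 : ∀ i : Fin (2 ^ n), -(z i - 0) ^ 2 / (2 * (ε * t / 2 ^ n))
        = z i ^ 2 * (-((2:ℝ) ^ n / (2 * t * ε))) := by
      intro i
      rw [sub_zero, div_eq_iff (by positivity : (2 * (ε * t / 2 ^ n)) ≠ 0)]
      field_simp
    rw [Finset.sum_congr rfl fun i _ => e1 i, ← Finset.sum_mul, hA z]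
    field_simp
    ring
  -- the two tendsto pieces
  have hmain := aux_laplace A hAc (2 ^ n / (2 * t)) (Cφ + Cv * t) hc hlow
  have hT1 : Tendsto (fun ε : ℝ =>
      -ε * Real.log (((Real.sqrt (2 * Real.pi * (ε * t / 2 ^ n)))⁻¹) ^ (2 ^ n)))
      (nhdsWithin 0 (Set.Ioi 0)) (nhds 0) := by
    have ha : (0:ℝ) < 2 * Real.pi * t / 2 ^ n := by positivity
    have hx : Tendsto (fun ε : ℝ => ε * Real.log ε) (nhds 0) (nhds 0) := by
      have h0 := Real.continuous_mul_log.tendsto 0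
      simpa using h0
    have hy : Tendsto (fun ε : ℝ => ε * Real.log (2 * Real.pi * t / 2 ^ n)) (nhds 0)
        (nhds 0) := by
      have h00 : Continuous fun ε : ℝ => ε * Real.log (2 * Real.pi * t / 2 ^ n) :=
        continuous_id.mul continuous_const
      have h0 := h00.tendsto (0:ℝ)
      simpa using h0
    have h2 : Tendsto (fun ε : ℝ => ((2:ℝ) ^ n / 2)
        * (ε * Real.log (2 * Real.pi * t / 2 ^ n) + ε * Real.log ε))
        (nhdsWithin 0 (Set.Ioi 0)) (nhds 0) := by
      have h3 := ((hy.add hx).const_mul ((2:ℝ) ^ n / 2)).mono_left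
        (nhdsWithin_le_nhds (s := Set.Ioi (0:ℝ)))
      simpa using h3
    refine Tendsto.congr' ?_ h2
    filter_upwards [self_mem_nhdsWithin] with ε hε
    have hε0 : (0:ℝ) < ε := hε
    have harg : 2 * Real.pi * (ε * t / 2 ^ n) = (2 * Real.pi * t / 2 ^ n) * ε := by
      ring
    rw [harg, Real.log_pow, Real.log_inv,
      Real.log_sqrt (by positivity : (0:ℝ) ≤ (2 * Real.pi * t / 2 ^ n) * ε),
      Real.log_mul ha.ne' hε0.ne']
    push_cast
    ring
  -- combine
  have hIpos : ∀ ε : ℝ, 0 < ε → 0 < ∫ z, Real.exp (-A z / ε)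
      ∂(Measure.pi fun _ : Fin (2 ^ n) => (volume : Measure ℝ)) :=
    fun ε hε => aux_int_pos (aux_A_int hAc hc hlow hε) fun z => Real.exp_pos _
  have hsum := hT1.add hmain
  rw [zero_add] at hsum
  refine Tendsto.congr' ?_ hsum
  filter_upwards [self_mem_nhdsWithin] with ε hε
  have hε0 : (0:ℝ) < ε := hε
  have hD : (0:ℝ) < ((Real.sqrt (2 * Real.pi * (ε * t / 2 ^ n)))⁻¹) ^ (2 ^ n) := by
    have : (0:ℝ) < Real.sqrt (2 * Real.pi * (ε * t / 2 ^ n)) :=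
      Real.sqrt_pos.mpr (by positivity)
    positivity
  rw [hconv ε hε0, Real.log_mul hD.ne' (hIpos ε hε0).ne', mul_add]
end

section
/- (Existence of the minimiser.) Fix t > 0 and x ∈ ℝ. Let V : [0,t] × ℝ → ℝ be continuous and bounded with bounded, continuous derivative in the second variable, and let φ : ℝ → ℝ be continuously differentiable and bounded with bounded derivative. Call y : [0,t] → ℝ admissible if there exists g ∈ L²([0,t]) with y(s) = y(0) + ∫_0^s g(r) dr for all s ∈ [0,t] and y(t) = x, and for such y set A(y) = ½∫_0^t g(s)² ds + ∫_0^t V(s, y(s)) ds + φ(y(0)). Then there exists an admissible ỹ with A(ỹ) = inf { A(y) : y admissible }. -/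
/-!
Identify a control `g ∈ L²(0,t)` with the weak-* continuous functional `ℓ = ⟪g, ·⟫`. Since
`∫ₛᵗ g = ℓ(𝟙_(s,t])`, the admissible path is `y(s) = x - ℓ(𝟙_(s,t])` and the action becomes
`½‖ℓ‖² + Φ(ℓ)` with `Φ` bounded by the bounds on `V` and `φ`. The map `s ↦ 𝟙_(s,t]` is
norm-continuous into `L²`, so on bounded sets `(ℓ, s) ↦ ℓ(𝟙_(s,t])` is jointly continuous and `Φ`
is weak-* continuous, while `½‖ℓ‖²` is weak-* lower semicontinuous. By Banach–Alaoglu the action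
attains its minimum on a large enough ball, and outside that ball it exceeds its value at `0`.
-/

open MeasureTheory intervalIntegral

open Set Filter Topology Metric
open scoped symmDiff

namespace WeakDual

section Seminormed

variable {𝕜 E : Type*} [NontriviallyNormedField 𝕜] [SeminormedAddCommGroup E] [NormedSpace 𝕜 E]

theorem lowerSemicontinuous_half_norm_sq :
    LowerSemicontinuous fun ℓ : WeakDual 𝕜 E => 1 / 2 * ‖toStrongDual ℓ‖ ^ 2 := by
  refine lowerSemicontinuous_iff_isClosed_preimage.2 fun c => ?_
  rcases lt_or_ge c 0 with hc | hc
  · convert isClosed_empty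
    ext ℓ
    simp only [mem_preimage, mem_Iic, mem_empty_iff_false, iff_false, not_le]
    exact hc.trans_le (by positivity)
  · convert isClosed_closedBall (0 : StrongDual 𝕜 E) √(2 * c) using 1
    ext ℓ
    rw [mem_preimage, mem_preimage, mem_closedBall_zero_iff,
      Real.le_sqrt (norm_nonneg _) (by linarith), mem_Iic]
    constructor <;> intro h <;> linarith

theorem continuousOn_apply_comp {X : Type*} [TopologicalSpace X] {v : X → E} (hv : Continuous v)
    (R : ℝ) :
    ContinuousOn (fun p : WeakDual 𝕜 E × X => p.1 (v p.2))
      ((toStrongDual ⁻¹' closedBall 0 R) ×ˢ univ) := by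
  rintro ⟨ℓ₀, x₀⟩ -
  have hsmall : Tendsto (fun p : WeakDual 𝕜 E × X => p.1 (v p.2 - v x₀))
      (𝓝[(toStrongDual ⁻¹' closedBall 0 R) ×ˢ univ] (ℓ₀, x₀)) (𝓝 0) := by
    have hbound : Continuous fun p : WeakDual 𝕜 E × X => R * ‖v p.2 - v x₀‖ := by fun_prop
    refine squeeze_zero_norm' ?_
      (by simpa using (hbound.tendsto (ℓ₀, x₀)).mono_left nhdsWithin_le_nhds)
    filter_upwards [self_mem_nhdsWithin] with p hp
    exact (toStrongDual p.1).le_of_opNorm_le (mem_closedBall_zero_iff.1 hp.1) _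
  have hfixed : Continuous fun p : WeakDual 𝕜 E × X => p.1 (v x₀) :=
    (eval_continuous (v x₀)).comp continuous_fst
  simpa [ContinuousWithinAt] using hfixed.continuousWithinAt.tendsto.add hsmall

end Seminormed

variable {E : Type*} [SeminormedAddCommGroup E] [NormedSpace ℝ E]

theorem exists_forall_half_norm_sq_add_le {Φ : WeakDual ℝ E → ℝ} {M : ℝ} (hΦ : ∀ ℓ, |Φ ℓ| ≤ M)
    (hcont : ∀ R, ContinuousOn Φ (toStrongDual ⁻¹' closedBall 0 R)) :
    ∃ ℓ₀, ∀ ℓ, 1 / 2 * ‖toStrongDual ℓ₀‖ ^ 2 + Φ ℓ₀ ≤ 1 / 2 * ‖toStrongDual ℓ‖ ^ 2 + Φ ℓ := by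
  have hM : 0 ≤ M := (abs_nonneg _).trans (hΦ 0)
  set K := toStrongDual ⁻¹' closedBall (0 : StrongDual ℝ E) (2 * √M)
  have h0K : (0 : WeakDual ℝ E) ∈ K := by simp [K]
  obtain ⟨ℓ₀, -, hmin⟩ := (lowerSemicontinuous_half_norm_sq.lowerSemicontinuousOn K).add
    (hcont _).lowerSemicontinuousOn |>.exists_isMinOn ⟨0, h0K⟩ (isCompact_closedBall 0 _)
  refine ⟨ℓ₀, fun ℓ => ?_⟩
  by_cases hℓ : ℓ ∈ K
  · exact hmin hℓ
  have hfar : 2 * √M < ‖toStrongDual ℓ‖ := by simpa [K] using hℓ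
  have hsq : 4 * M < ‖toStrongDual ℓ‖ ^ 2 := by
    nlinarith [Real.sq_sqrt hM, Real.sqrt_nonneg M]
  have h0 : 1 / 2 * ‖toStrongDual ℓ₀‖ ^ 2 + Φ ℓ₀ ≤ Φ 0 := by simpa using hmin h0K
  linarith [(abs_le.1 (hΦ 0)).2, (abs_le.1 (hΦ ℓ)).1]

end WeakDual

theorem MeasureTheory.MemLp.intervalIntegrable_of_mem_Icc {a b c d : ℝ} {g : ℝ → ℝ}
    {p : ENNReal} (hp : 1 ≤ p) (hg : MemLp g p (volume.restrict (Icc a b)))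
    (hc : c ∈ Icc a b) (hd : d ∈ Icc a b) : IntervalIntegrable g volume c d :=
  (IntegrableOn.mono_set (hg.integrable hp) (uIcc_subset_Icc hc hd)).intervalIntegrable

theorem intervalIntegral.continuous_parametric_intervalIntegral_of_continuousOn {X E : Type*}
    [TopologicalSpace X] [NormedAddCommGroup E] [NormedSpace ℝ E] {f : X → ℝ → E} {a b : ℝ}
    (hab : a ≤ b) (hf : ContinuousOn (Function.uncurry f) (univ ×ˢ Icc a b)) :
    Continuous fun z => ∫ s in a..b, f z s := by
  have hproj : ∀ z, ∫ s in a..b, f z s = ∫ s in a..b, f z (projIcc a b hab s) := fun z =>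
    integral_congr fun s hs => by rw [projIcc_of_mem hab (uIcc_of_le hab ▸ hs)]
  simp_rw [hproj]
  refine continuous_parametric_intervalIntegral_of_continuous' ?_ a b
  exact hf.comp_continuous (continuous_fst.prodMk (continuous_subtype_val.comp
    ((continuous_projIcc (h := hab)).comp continuous_snd))) fun p => ⟨trivial, Subtype.prop _⟩

local notation "L²[" t "]" => Lp ℝ 2 (volume.restrict (Icc (0 : ℝ) t))

noncomputable def tailIndicator (t s : ℝ) : L²[t] :=
  indicatorConstLp 2 (measurableSet_Ioc (a := s) (b := t)) (measure_ne_top _ _) 1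

section TailIndicator

variable {t : ℝ}

theorem continuous_tailIndicator : Continuous (tailIndicator t) := by
  refine continuous_indicatorConstLp_set ENNReal.ofNat_ne_top fun s => ?_
  have hsub : ∀ s', Ioc s' t ∆ Ioc s t ⊆ uIcc s' s := fun s' r hr => by
    simp only [mem_symmDiff, mem_Ioc, mem_uIcc] at hr ⊢
    grind
  have hle : ∀ s', volume.restrict (Icc (0 : ℝ) t) (Ioc s' t ∆ Ioc s t) ≤
      ENNReal.ofReal |s - s'| := fun s' =>
    (Measure.restrict_le_self _).trans ((measure_mono (hsub s')).trans Real.volume_interval.le)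
  have hlim : Tendsto (fun s' => ENNReal.ofReal |s - s'|) (𝓝 s) (𝓝 0) := by
    have : Continuous fun s' => ENNReal.ofReal |s - s'| :=
      ENNReal.continuous_ofReal.comp (by fun_prop)
    simpa using this.tendsto s
  exact tendsto_of_tendsto_of_tendsto_of_le_of_le tendsto_const_nhds hlim (fun _ => zero_le) hle

theorem inner_tailIndicator_toLp {g : ℝ → ℝ} (hg : MemLp g 2 (volume.restrict (Icc (0 : ℝ) t)))
    {s : ℝ} (hs : s ∈ Icc 0 t) : inner ℝ (tailIndicator t s) (hg.toLp g) = ∫ r in s..t, g r := by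
  rw [tailIndicator, L2.inner_indicatorConstLp_one,
    integral_congr_ae (ae_restrict_of_ae hg.coeFn_toLp),
    Measure.restrict_restrict measurableSet_Ioc,
    inter_eq_left.2 (Ioc_subset_Icc_self.trans (Icc_subset_Icc_left hs.1)), integral_of_le hs.2]

end TailIndicator

section Potential

variable (t x : ℝ) (V : ℝ → ℝ → ℝ) (φ : ℝ → ℝ)

noncomputable def potential (ℓ : WeakDual ℝ L²[t]) : ℝ :=
  (∫ s in (0 : ℝ)..t, V s (x - ℓ (tailIndicator t s))) + φ (x - ℓ (tailIndicator t 0))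

variable {t V φ}

theorem abs_potential_le (ht : 0 ≤ t) {CV Cφ : ℝ} (hV : ∀ s ∈ Icc 0 t, ∀ y, |V s y| ≤ CV)
    (hφ : ∀ y, |φ y| ≤ Cφ) (ℓ : WeakDual ℝ L²[t]) :
    |potential t x V φ ℓ| ≤ CV * t + Cφ := by
  have hint : |∫ s in (0 : ℝ)..t, V s (x - ℓ (tailIndicator t s))| ≤ CV * t := by
    simpa [abs_of_nonneg ht] using norm_integral_le_of_norm_le_const fun s hs =>
      (Real.norm_eq_abs _).trans_le (hV s (Ioc_subset_Icc_self ((uIoc_of_le ht) ▸ hs)) _)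
  exact (abs_add_le _ _).trans (add_le_add hint (hφ _))

theorem continuousOn_potential (ht : 0 ≤ t)
    (hV : ContinuousOn (fun p : ℝ × ℝ => V p.1 p.2) (Icc 0 t ×ˢ univ)) (hφ : Continuous φ)
    (R : ℝ) : ContinuousOn (potential t x V φ) (WeakDual.toStrongDual ⁻¹' closedBall 0 R) := by
  refine ContinuousOn.add ?_
    (hφ.comp (continuous_const.sub (WeakDual.eval_continuous _))).continuousOn
  set K := WeakDual.toStrongDual ⁻¹' closedBall (0 : StrongDual ℝ L²[t]) R
  have hpath : ContinuousOn (fun p : K × ℝ => x - (p.1 : WeakDual ℝ L²[t]) (tailIndicator t p.2))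
      (univ ×ˢ Icc 0 t) :=
    continuousOn_const.sub <| (WeakDual.continuousOn_apply_comp continuous_tailIndicator R).comp
      (continuous_subtype_val.prodMap continuous_id).continuousOn fun p _ => ⟨p.1.2, trivial⟩
  rw [continuousOn_iff_continuous_domRestrict]
  exact continuous_parametric_intervalIntegral_of_continuousOn ht
    (hV.comp (continuous_snd.continuousOn.prodMk hpath) fun p hp => ⟨hp.2, trivial⟩)

theorem exists_forall_half_norm_sq_add_potential_le (ht : 0 ≤ t)
    (hV : ContinuousOn (fun p : ℝ × ℝ => V p.1 p.2) (Icc 0 t ×ˢ univ)) {CV Cφ : ℝ}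
    (hVbdd : ∀ s ∈ Icc 0 t, ∀ y, |V s y| ≤ CV) (hφ : Continuous φ) (hφbdd : ∀ y, |φ y| ≤ Cφ) :
    ∃ ℓ₀, ∀ ℓ, 1 / 2 * ‖WeakDual.toStrongDual ℓ₀‖ ^ 2 + potential t x V φ ℓ₀ ≤
      1 / 2 * ‖WeakDual.toStrongDual ℓ‖ ^ 2 + potential t x V φ ℓ :=
  WeakDual.exists_forall_half_norm_sq_add_le (abs_potential_le x ht hVbdd hφbdd)
    (continuousOn_potential x ht hV hφ)

end Potential

open InnerProductSpace (toDual toDual_apply_apply)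

section Action

def IsAdmissible (t x : ℝ) (y g : ℝ → ℝ) : Prop :=
  MemLp g 2 (volume.restrict (Icc (0 : ℝ) t)) ∧
    (∀ s ∈ Icc (0 : ℝ) t, y s = y 0 + ∫ r in (0 : ℝ)..s, g r) ∧ y t = x

noncomputable def action (t : ℝ) (V : ℝ → ℝ → ℝ) (φ : ℝ → ℝ) (y g : ℝ → ℝ) : ℝ :=
  (1 / 2) * (∫ s in (0 : ℝ)..t, (g s) ^ 2) + (∫ s in (0 : ℝ)..t, V s (y s)) + φ (y 0)

variable {t x : ℝ} {V : ℝ → ℝ → ℝ} {φ : ℝ → ℝ}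

theorem IsAdmissible.eq_sub_integral {y g : ℝ → ℝ} (h : IsAdmissible t x y g) {s : ℝ}
    (hs : s ∈ Icc 0 t) : y s = x - ∫ r in s..t, g r := by
  have h0 : (0 : ℝ) ∈ Icc 0 t := ⟨le_rfl, hs.1.trans hs.2⟩
  have ht : t ∈ Icc 0 t := ⟨hs.1.trans hs.2, le_rfl⟩
  rw [← h.2.2, h.2.1 s hs, h.2.1 t ht, ← integral_add_adjacent_intervals
    (h.1.intervalIntegrable_of_mem_Icc one_le_two h0 hs)
    (h.1.intervalIntegrable_of_mem_Icc one_le_two hs ht)]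
  ring

theorem isAdmissible_sub_integral (ht : 0 ≤ t) {g : ℝ → ℝ}
    (hg : MemLp g 2 (volume.restrict (Icc (0 : ℝ) t))) :
    IsAdmissible t x (fun s => x - ∫ r in s..t, g r) g := by
  refine ⟨hg, fun s hs => ?_, by simp⟩
  dsimp only
  rw [← integral_add_adjacent_intervals (hg.intervalIntegrable_of_mem_Icc one_le_two
    (left_mem_Icc.2 ht) hs) (hg.intervalIntegrable_of_mem_Icc one_le_two hs (right_mem_Icc.2 ht))]
  ring

theorem norm_toLp_sq_eq_integral_sq (ht : 0 ≤ t) {g : ℝ → ℝ}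
    (hg : MemLp g 2 (volume.restrict (Icc (0 : ℝ) t))) :
    ‖hg.toLp g‖ ^ 2 = ∫ s in (0 : ℝ)..t, g s ^ 2 := by
  rw [← real_inner_self_eq_norm_sq, L2.inner_def, integral_of_le ht,
    Measure.restrict_congr_set Ioc_ae_eq_Icc]
  refine integral_congr_ae (hg.coeFn_toLp.mono fun r hr => ?_)
  simp [hr, sq]

theorem action_eq_of_isAdmissible (ht : 0 ≤ t) {y g : ℝ → ℝ} (h : IsAdmissible t x y g) :
    action t V φ y g =
      1 / 2 * ‖WeakDual.toStrongDual (StrongDual.toWeakDual (toDual ℝ L²[t] (h.1.toLp g)))‖ ^ 2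
        + potential t x V φ (StrongDual.toWeakDual (toDual ℝ L²[t] (h.1.toLp g))) := by
  have hpath : ∀ s ∈ Icc 0 t,
      y s = x - StrongDual.toWeakDual (toDual ℝ L²[t] (h.1.toLp g)) (tailIndicator t s) :=
    fun s hs => by
      rw [h.eq_sub_integral hs, StrongDual.coe_toWeakDual, toDual_apply_apply, real_inner_comm,
        inner_tailIndicator_toLp h.1 hs]
  rw [action, potential, ← norm_toLp_sq_eq_integral_sq ht h.1]
  -- hides the proof `h.1`, whose type mentions `y 0`, from the rewrite of `y 0` below
  set G := h.1.toLp g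
  rw [hpath 0 (left_mem_Icc.2 ht), integral_congr fun s hs => by rw [hpath s (uIcc_of_le ht ▸ hs)],
    StrongDual.toStrongDual_toWeakDual, LinearIsometryEquiv.norm_map]
  ring

theorem exists_isAdmissible_isLeast_action (ht : 0 ≤ t)
    (hV : ContinuousOn (fun p : ℝ × ℝ => V p.1 p.2) (Icc 0 t ×ˢ univ)) {CV Cφ : ℝ}
    (hVbdd : ∀ s ∈ Icc 0 t, ∀ y, |V s y| ≤ CV) (hφ : Continuous φ) (hφbdd : ∀ y, |φ y| ≤ Cφ) :
    ∃ y g, IsAdmissible t x y g ∧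
      IsLeast {a | ∃ y g, IsAdmissible t x y g ∧ a = action t V φ y g} (action t V φ y g) := by
  obtain ⟨ℓ, hℓ⟩ := exists_forall_half_norm_sq_add_potential_le x ht hV hVbdd hφ hφbdd
  set G := (toDual ℝ L²[t]).symm (WeakDual.toStrongDual ℓ)
  have hadm := isAdmissible_sub_integral (x := x) ht (Lp.memLp G)
  refine ⟨_, _, hadm, ⟨_, _, hadm, rfl⟩, ?_⟩
  rintro _ ⟨y, g, h, rfl⟩
  have hGℓ : StrongDual.toWeakDual (toDual ℝ L²[t] G) = ℓ := by simp [G]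
  rw [action_eq_of_isAdmissible ht hadm, action_eq_of_isAdmissible ht h, Lp.toLp_coeFn, hGℓ]
  exact hℓ _

end Action

theorem exists_action_minimiser_general (t x : ℝ) (ht : 0 < t)
    (V : ℝ → ℝ → ℝ) (φ : ℝ → ℝ)
    (hVcont : ContinuousOn (fun p : ℝ × ℝ => V p.1 p.2) (Set.Icc 0 t ×ˢ Set.univ))
    (hVbdd : ∃ C, ∀ s ∈ Set.Icc (0:ℝ) t, ∀ y, |V s y| ≤ C)
    (hφ : ContDiff ℝ 1 φ) (hφbdd : ∃ C, ∀ y, |φ y| ≤ C)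
    (Adm : (ℝ → ℝ) → (ℝ → ℝ) → Prop)
    (hAdm : ∀ y g, Adm y g ↔
      MemLp g 2 (volume.restrict (Set.Icc (0:ℝ) t)) ∧
      (∀ s ∈ Set.Icc (0:ℝ) t, y s = y 0 + ∫ r in (0:ℝ)..s, g r) ∧
      y t = x)
    (A : (ℝ → ℝ) → (ℝ → ℝ) → ℝ)
    (hA : ∀ y g, A y g = (1 / 2) * (∫ s in (0:ℝ)..t, (g s) ^ 2)
        + (∫ s in (0:ℝ)..t, V s (y s)) + φ (y 0)) :
    ∃ ytilde gtilde, Adm ytilde gtilde ∧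
      A ytilde gtilde = sInf {a : ℝ | ∃ y g, Adm y g ∧ a = A y g} := by
  obtain ⟨CV, hCV⟩ := hVbdd
  obtain ⟨Cφ, hCφ⟩ := hφbdd
  have hAdm' : Adm = IsAdmissible t x := funext₂ fun y g => propext (hAdm y g)
  have hA' : A = action t V φ := funext₂ hA
  subst hAdm' hA'
  obtain ⟨y, g, hadm, hleast⟩ :=
    exists_isAdmissible_isLeast_action ht.le hVcont hCV hφ.continuous hCφ
  exact ⟨y, g, hadm, hleast.csInf_eq.symm⟩

/-- **Existence of the minimiser of the action functional** (Tonelli).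
Admissible trajectories are `W^{1,2}` paths `y(s) = y(0) + ∫₀ˢ g` with `g ∈ L²([0,t])` and
`y(t) = x`; the action is `A(y) = ½∫₀ᵗ g² + ∫₀ᵗ V(s,y(s)) ds + φ(y(0))`.  There exists an
admissible trajectory attaining the infimum of the action over all admissible trajectories. -/
theorem exists_action_minimiser (t x : ℝ) (ht : 0 < t)
    (V : ℝ → ℝ → ℝ) (φ : ℝ → ℝ)
    (hVcont : ContinuousOn (fun p : ℝ × ℝ => V p.1 p.2) (Set.Icc 0 t ×ˢ Set.univ))
    (hVbdd : ∃ C, ∀ s ∈ Set.Icc (0:ℝ) t, ∀ y, |V s y| ≤ C)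
    (Vx : ℝ → ℝ → ℝ)
    (hVx : ∀ s ∈ Set.Icc (0:ℝ) t, ∀ y, HasDerivAt (V s) (Vx s y) y)
    (hVxcont : ContinuousOn (fun p : ℝ × ℝ => Vx p.1 p.2) (Set.Icc 0 t ×ˢ Set.univ))
    (hVxbdd : ∃ C, ∀ s ∈ Set.Icc (0:ℝ) t, ∀ y, |Vx s y| ≤ C)
    (hφ : ContDiff ℝ 1 φ) (hφbdd : ∃ C, ∀ y, |φ y| ≤ C)
    (hφ'bdd : ∃ C, ∀ y, |deriv φ y| ≤ C)
    (Adm : (ℝ → ℝ) → (ℝ → ℝ) → Prop)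
    (hAdm : ∀ y g, Adm y g ↔
      MemLp g 2 (volume.restrict (Set.Icc (0:ℝ) t)) ∧
      (∀ s ∈ Set.Icc (0:ℝ) t, y s = y 0 + ∫ r in (0:ℝ)..s, g r) ∧
      y t = x)
    (A : (ℝ → ℝ) → (ℝ → ℝ) → ℝ)
    (hA : ∀ y g, A y g = (1 / 2) * (∫ s in (0:ℝ)..t, (g s) ^ 2)
        + (∫ s in (0:ℝ)..t, V s (y s)) + φ (y 0)) :
    ∃ ytilde gtilde, Adm ytilde gtilde ∧
      A ytilde gtilde = sInf {a : ℝ | ∃ y g, Adm y g ∧ a = A y g} :=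
  exists_action_minimiser_general t x ht V φ hVcont hVbdd hφ hφbdd Adm hAdm A hA
end

section
/- Fix t > 0. Let V : [0,t] × ℝ → ℝ be continuously differentiable with derivative V_x in the second variable, and let φ : ℝ → ℝ be continuously differentiable. Let ψ : [0,t] × ℝ → ℝ be twice continuously differentiable (jointly in (s,x)) and satisfy, for all s ∈ [0,t] and x ∈ ℝ: ψ_ss(s,x) = V_x(s, ψ(s,x)), ψ(t,x) = x, and ψ_s(0,x) = φ'(ψ(0,x)). Define F(x) = φ(ψ(0,x)) + ∫_0^t ( ½·ψ_s(s,x)² + V(s, ψ(s,x)) ) ds. Then F is differentiable and F'(x) = ψ_s(t,x) for every x ∈ ℝ. -/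
open MeasureTheory intervalIntegral

/-!
Differentiating under the integral sign,
`F'(x) = φ'(ψ(0,x)) ψ_x(0,x) + ∫₀ᵗ (ψ_s ψ_sx + V_x(s,ψ) ψ_x) ds`.
By the Euler–Lagrange equation and the symmetry `ψ_sx = ψ_xs` of mixed partials, the integrand
is `∂_s (ψ_s ψ_x)`, so the integral is `ψ_s(t,x) ψ_x(t,x) - ψ_s(0,x) ψ_x(0,x)`. The initial
condition `ψ_s(0,x) = φ'(ψ(0,x))` cancels the boundary term at `0` against the `φ`-term, and
`ψ(t,·) = id` gives `ψ_x(t,x) = 1`.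
-/

section PartialDerivatives

variable {𝕜 E : Type*} [NontriviallyNormedField 𝕜] [NormedAddCommGroup E] [NormedSpace 𝕜 E]

noncomputable def partialFst (f : 𝕜 × 𝕜 → E) (p : 𝕜 × 𝕜) : E := fderiv 𝕜 f p (1, 0)

noncomputable def partialSnd (f : 𝕜 × 𝕜 → E) (p : 𝕜 × 𝕜) : E := fderiv 𝕜 f p (0, 1)

variable {f : 𝕜 × 𝕜 → E} {s x : 𝕜}

theorem DifferentiableAt.hasDerivAt_partialFst (hf : DifferentiableAt 𝕜 f (s, x)) :
    HasDerivAt (fun r => f (r, x)) (partialFst f (s, x)) s :=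
  hf.hasFDerivAt.comp_hasDerivAt s ((hasDerivAt_id s).prodMk (hasDerivAt_const s x))

theorem DifferentiableAt.hasDerivAt_partialSnd (hf : DifferentiableAt 𝕜 f (s, x)) :
    HasDerivAt (fun y => f (s, y)) (partialSnd f (s, x)) x :=
  hf.hasFDerivAt.comp_hasDerivAt x ((hasDerivAt_const x s).prodMk (hasDerivAt_id x))

theorem ContDiff.partialFst {m n : WithTop ℕ∞} (hf : ContDiff 𝕜 n f) (hmn : m + 1 ≤ n) :
    ContDiff 𝕜 m (partialFst f) :=
  (hf.fderiv_right hmn).clm_apply contDiff_const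

theorem ContDiff.partialSnd {m n : WithTop ℕ∞} (hf : ContDiff 𝕜 n f) (hmn : m + 1 ≤ n) :
    ContDiff 𝕜 m (partialSnd f) :=
  (hf.fderiv_right hmn).clm_apply contDiff_const

theorem partialFst_partialSnd_comm [IsRCLikeNormedField 𝕜] (hf : ContDiff 𝕜 2 f) (p : 𝕜 × 𝕜) :
    partialFst (partialSnd f) p = partialSnd (partialFst f) p := by
  have hf' : HasFDerivAt (fderiv 𝕜 f) (fderiv 𝕜 (fderiv 𝕜 f) p) p :=
    ((hf.fderiv_right (m := 1) le_rfl).differentiable one_ne_zero p).hasFDerivAt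
  have happly (v : 𝕜 × 𝕜) : HasFDerivAt (fun q => fderiv 𝕜 f q v)
      ((ContinuousLinearMap.apply 𝕜 E v).comp (fderiv 𝕜 (fderiv 𝕜 f) p)) p :=
    (ContinuousLinearMap.apply 𝕜 E v).hasFDerivAt.comp p hf'
  unfold partialFst partialSnd
  rw [(happly _).fderiv, (happly _).fderiv]
  exact (hf.contDiffAt.isSymmSndFDerivAt (by simp [minSmoothness_of_isRCLikeNormedField])) _ _

end PartialDerivatives

theorem hasDerivAt_intervalIntegral_of_continuous_partialSnd {E : Type*} [NormedAddCommGroup E]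
    [NormedSpace ℝ E] {g g' : ℝ × ℝ → E} (hg : Continuous g) (hg' : Continuous g')
    (hderiv : ∀ s x, HasDerivAt (fun y => g (s, y)) (g' (s, x)) x) (a b x₀ : ℝ) :
    HasDerivAt (fun x => ∫ s in a..b, g (s, x)) (∫ s in a..b, g' (s, x₀)) x₀ := by
  obtain ⟨C, hC⟩ : ∃ C, ∀ p ∈ Set.uIcc a b ×ˢ Metric.closedBall x₀ 1, ‖g' p‖ ≤ C :=
    (isCompact_uIcc.prod (isCompact_closedBall x₀ 1)).exists_bound_of_continuousOn
      hg'.continuousOn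
  have hslice {h : ℝ × ℝ → E} (hh : Continuous h) (x : ℝ) : Continuous fun s => h (s, x) :=
    hh.comp (continuous_id.prodMk continuous_const)
  refine (hasDerivAt_integral_of_dominated_loc_of_deriv_le (bound := fun _ => C)
    (Metric.ball_mem_nhds x₀ one_pos) (.of_forall fun x => (hslice hg x).aestronglyMeasurable)
    ((hslice hg x₀).intervalIntegrable a b) (hslice hg' x₀).aestronglyMeasurable
    (.of_forall fun s hs x hx => hC (s, x) ⟨Set.uIoc_subset_uIcc hs,
      Metric.ball_subset_closedBall hx⟩)
    intervalIntegrable_const (.of_forall fun s _ x _ => hderiv s x)).2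

section FirstVariation

variable {V Vx : ℝ → ℝ → ℝ} {ψ : ℝ × ℝ → ℝ}

theorem continuous_uncurry_of_hasDerivAt_snd (hV : ContDiff ℝ 1 fun p : ℝ × ℝ => V p.1 p.2)
    (hVx : ∀ s y, HasDerivAt (V s) (Vx s y) y) : Continuous fun p : ℝ × ℝ => Vx p.1 p.2 := by
  have hVx_eq : (fun p : ℝ × ℝ => Vx p.1 p.2) = partialSnd fun p : ℝ × ℝ => V p.1 p.2 :=
    funext fun p => (hVx p.1 p.2).unique (hV.differentiable one_ne_zero p).hasDerivAt_partialSnd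
  rw [hVx_eq]
  exact (hV.partialSnd (m := 0) le_rfl).continuous

noncomputable def lagrangian (V : ℝ → ℝ → ℝ) (ψ : ℝ × ℝ → ℝ) (p : ℝ × ℝ) : ℝ :=
  1 / 2 * partialFst ψ p ^ 2 + V p.1 (ψ p)

theorem hasDerivAt_lagrangian_snd (hVx : ∀ s y, HasDerivAt (V s) (Vx s y) y)
    (hψ : ContDiff ℝ 2 ψ) (s x : ℝ) :
    HasDerivAt (fun y => lagrangian V ψ (s, y))
      (partialFst ψ (s, x) * partialSnd (partialFst ψ) (s, x)
        + Vx s (ψ (s, x)) * partialSnd ψ (s, x)) x := by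
  have hσ := ((hψ.partialFst (m := 1) (by norm_num)).differentiable one_ne_zero
    (s, x)).hasDerivAt_partialSnd
  have hξ := (hψ.differentiable two_ne_zero (s, x)).hasDerivAt_partialSnd
  refine (((hσ.pow 2).const_mul (1 / 2)).add ((hVx s (ψ (s, x))).comp x hξ)).congr_deriv ?_
  push_cast
  ring

theorem hasDerivAt_partialFst_mul_partialSnd (hψ : ContDiff ℝ 2 ψ) {s x : ℝ}
    (hEL : partialFst (partialFst ψ) (s, x) = Vx s (ψ (s, x))) :
    HasDerivAt (fun r => partialFst ψ (r, x) * partialSnd ψ (r, x))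
      (partialFst ψ (s, x) * partialSnd (partialFst ψ) (s, x)
        + Vx s (ψ (s, x)) * partialSnd ψ (s, x)) s := by
  have hσ := ((hψ.partialFst (m := 1) (by norm_num)).differentiable one_ne_zero
    (s, x)).hasDerivAt_partialFst
  have hξ := ((hψ.partialSnd (m := 1) (by norm_num)).differentiable one_ne_zero
    (s, x)).hasDerivAt_partialFst
  refine (hσ.mul hξ).congr_deriv ?_
  rw [hEL, partialFst_partialSnd_comm hψ]
  ring

theorem hasDerivAt_integral_lagrangian {t : ℝ} (ht : 0 ≤ t)
    (hV : ContDiff ℝ 1 fun p : ℝ × ℝ => V p.1 p.2) (hVx : ∀ s y, HasDerivAt (V s) (Vx s y) y)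
    (hψ : ContDiff ℝ 2 ψ)
    (hEL : ∀ s ∈ Set.Icc 0 t, ∀ x, partialFst (partialFst ψ) (s, x) = Vx s (ψ (s, x)))
    (x : ℝ) :
    HasDerivAt (fun y => ∫ s in 0..t, lagrangian V ψ (s, y))
      (partialFst ψ (t, x) * partialSnd ψ (t, x) - partialFst ψ (0, x) * partialSnd ψ (0, x))
      x := by
  have hσ := hψ.partialFst (m := 1) (by norm_num)
  have hL : Continuous (lagrangian V ψ) :=
    (continuous_const.mul (hσ.continuous.pow 2)).add
      (hV.continuous.comp (continuous_fst.prodMk hψ.continuous))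
  have hL' : Continuous fun p : ℝ × ℝ =>
      partialFst ψ p * partialSnd (partialFst ψ) p + Vx p.1 (ψ p) * partialSnd ψ p :=
    (hσ.continuous.mul (hσ.partialSnd (m := 0) le_rfl).continuous).add
      (((continuous_uncurry_of_hasDerivAt_snd hV hVx).comp
        (continuous_fst.prodMk hψ.continuous)).mul
          (hψ.partialSnd (m := 0) (by norm_num)).continuous)
  have hderiv := hasDerivAt_intervalIntegral_of_continuous_partialSnd hL hL'
    (hasDerivAt_lagrangian_snd hVx hψ) 0 t x
  rwa [integral_eq_sub_of_hasDerivAt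
    (fun s hs => hasDerivAt_partialFst_mul_partialSnd hψ (hEL s (Set.uIcc_of_le ht ▸ hs) x))
    ((hL'.comp (continuous_id.prodMk continuous_const)).intervalIntegrable 0 t)] at hderiv

end FirstVariation

/-- **Derivative of the value function along a family of Euler–Lagrange trajectories.**
If `ψ(s,x)` is a `C²` family of solutions of `ψ_ss = V_x(s,ψ)` with `ψ(t,x) = x` and
`ψ_s(0,x) = φ'(ψ(0,x))`, then the value function
`F(x) = φ(ψ(0,x)) + ∫₀ᵗ (½ ψ_s(s,x)² + V(s,ψ(s,x))) ds` is differentiable with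
`F'(x) = ψ_s(t,x)`. -/
theorem deriv_value_function_eq_velocity (t : ℝ) (ht : 0 < t)
    (V : ℝ → ℝ → ℝ) (hV : ContDiff ℝ 1 fun p : ℝ × ℝ => V p.1 p.2)
    (Vx : ℝ → ℝ → ℝ) (hVx : ∀ s y, HasDerivAt (V s) (Vx s y) y)
    (φ : ℝ → ℝ) (hφ : ContDiff ℝ 1 φ)
    (ψ : ℝ → ℝ → ℝ) (hψ : ContDiff ℝ 2 fun p : ℝ × ℝ => ψ p.1 p.2)
    (hEL : ∀ s ∈ Set.Icc (0:ℝ) t, ∀ x : ℝ,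
      deriv (fun r => deriv (fun r' => ψ r' x) r) s = Vx s (ψ s x))
    (hterm : ∀ x : ℝ, ψ t x = x)
    (hinit : ∀ x : ℝ, deriv (fun r => ψ r x) 0 = deriv φ (ψ 0 x))
    (F : ℝ → ℝ)
    (hF : ∀ x, F x = φ (ψ 0 x)
        + ∫ s in (0:ℝ)..t, ((1 / 2) * (deriv (fun r => ψ r x) s) ^ 2 + V s (ψ s x))) :
    ∀ x : ℝ, HasDerivAt F (deriv (fun r => ψ r x) t) x := by
  intro x
  set Ψ : ℝ × ℝ → ℝ := fun p => ψ p.1 p.2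
  have hψs (s y : ℝ) : deriv (fun r => ψ r y) s = partialFst Ψ (s, y) :=
    (hψ.differentiable two_ne_zero (s, y)).hasDerivAt_partialFst.deriv
  have hΨEL : ∀ s ∈ Set.Icc 0 t, ∀ y, partialFst (partialFst Ψ) (s, y) = Vx s (Ψ (s, y)) := by
    intro s hs y
    rw [← hEL s hs y, ← ((hψ.partialFst (m := 1) (by norm_num)).differentiable one_ne_zero
      (s, y)).hasDerivAt_partialFst.deriv]
    simp only [hψs]
  have hξt : partialSnd Ψ (t, x) = 1 :=
    (hψ.differentiable two_ne_zero (t, x)).hasDerivAt_partialSnd.unique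
      (by simpa only [Ψ, hterm] using hasDerivAt_id' x)
  have hφψ : HasDerivAt (fun y => φ (ψ 0 y)) (partialFst Ψ (0, x) * partialSnd Ψ (0, x)) x := by
    rw [← hψs, hinit]
    exact (hφ.differentiable one_ne_zero _).hasDerivAt.comp x
      (hψ.differentiable two_ne_zero (0, x)).hasDerivAt_partialSnd
  have hFΨ : F = fun y => φ (ψ 0 y) + ∫ s in 0..t, lagrangian V Ψ (s, y) := by
    funext y
    simp only [hF, hψs]
    rfl
  rw [hFΨ, hψs]
  refine (hφψ.add (hasDerivAt_integral_lagrangian ht.le hV hVx hψ hΨEL x)).congr_deriv ?_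
  rw [hξt]
  ring
end

section
/- (Upper bound on the space derivative for the inviscid Burgers equation.) Fix T > 0. Let V : [0,T] × ℝ → ℝ and φ : ℝ → ℝ be twice continuously differentiable with sup_{s,x} |V_x(s,x)| + sup_{s,x} |V_xx(s,x)| < ∞, sup_x φ''(x) < ∞ and sup_x |φ'(x)| < ∞. Suppose u : [0,T] × ℝ → ℝ is twice continuously differentiable and satisfies u_t + ½(u²)_x = V_x on [0,T] × ℝ with u(0,·) = φ'. Then for every t ∈ [0,T], sup_{0≤s≤t} sup_x u_x(s,x) ≤ sup_x φ''(x) + t·sup_{s,x} V_xx(s,x). -/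
/-!
Let `X` be the backward characteristic through `(s, y)`, i.e. `X τ` is the position at time
`s - τ` and `X' = -u (s - τ, X)`. Along it the equation reads `d/dτ u = -V_x`, and its
`x`-derivative is the Riccati equation `d/dτ u_x = u_x² - V_xx ≥ -sup V_xx`. Integrating over
`[0, s]` gives `u_x (s, y) ≤ φ'' (X s) + s · sup V_xx`, and `sup V_xx ≥ 0` because `V_x` is
bounded. The characteristic comes from Picard–Lindelöf applied to the velocity clamped at a level
`K`; since `|u|` grows at most like `sup |V_x|` along it, the clamp is inactive once `K` is large.
-/

open Set Metric

noncomputable section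

lemma HasDerivWithinAt.Ici_of_Icc {f : ℝ → ℝ} {f' a b x : ℝ}
    (h : HasDerivWithinAt f f' (Icc a b) x) (hx : x ∈ Ico a b) :
    HasDerivWithinAt f f' (Ici x) x :=
  h.mono_of_mem_nhdsWithin <|
    Filter.mem_of_superset (Icc_mem_nhdsGE hx.2) (Icc_subset_Icc_left hx.1)

lemma nonneg_of_abs_le_of_deriv_le {f : ℝ → ℝ} (hf : Differentiable ℝ f) {C M : ℝ}
    (hC : ∀ x, |f x| ≤ C) (hM : ∀ x, deriv f x ≤ M) : 0 ≤ M := by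
  by_contra! hneg
  have hC0 : 0 ≤ C := (abs_nonneg _).trans (hC 0)
  set x := (2 * C + 1) / -M
  have hx : 0 ≤ x := div_nonneg (by linarith) (by linarith)
  have hMx : M * x = -(2 * C + 1) := by simp only [x]; field_simp [hneg.ne]
  have := image_sub_le_mul_sub_of_deriv_le hf hM hx
  have h0 := abs_le.mp (hC 0)
  have hx' := abs_le.mp (hC x)
  rw [sub_zero, hMx] at this
  linarith

namespace Burgers

variable {F U : ℝ × ℝ → ℝ}

def dt (F : ℝ × ℝ → ℝ) (p : ℝ × ℝ) : ℝ := fderiv ℝ F p (1, 0)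

def dx (F : ℝ × ℝ → ℝ) (p : ℝ × ℝ) : ℝ := fderiv ℝ F p (0, 1)

def materialDeriv (U F : ℝ × ℝ → ℝ) (p : ℝ × ℝ) : ℝ := dt F p + U p * dx F p

lemma apply_pair_eq (L : ℝ × ℝ →L[ℝ] ℝ) (a b : ℝ) :
    L (a, b) = a * L (1, 0) + b * L (0, 1) := by
  have : ((a, b) : ℝ × ℝ) = a • ((1 : ℝ), (0 : ℝ)) + b • ((0 : ℝ), (1 : ℝ)) := by simp
  rw [this, map_add, map_smul, map_smul, smul_eq_mul, smul_eq_mul]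

lemma hasDerivAt_dx {t x : ℝ} (hF : DifferentiableAt ℝ F (t, x)) :
    HasDerivAt (fun z => F (t, z)) (dx F (t, x)) x := by
  simpa [dx, Function.comp_def] using
    hF.hasFDerivAt.comp_hasDerivAt x ((hasDerivAt_const x t).prodMk (hasDerivAt_id x))

lemma hasDerivAt_dt {t x : ℝ} (hF : DifferentiableAt ℝ F (t, x)) :
    HasDerivAt (fun r => F (r, x)) (dt F (t, x)) t := by
  simpa [dt, Function.comp_def] using
    hF.hasFDerivAt.comp_hasDerivAt t ((hasDerivAt_id t).prodMk (hasDerivAt_const t x))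

lemma contDiff_dx (hF : ContDiff ℝ 2 F) : ContDiff ℝ 1 (dx F) :=
  (hF.fderiv_right (m := 1) (by norm_num)).clm_apply contDiff_const

lemma contDiff_dt (hF : ContDiff ℝ 2 F) : ContDiff ℝ 1 (dt F) :=
  (hF.fderiv_right (m := 1) (by norm_num)).clm_apply contDiff_const

lemma dt_dx_eq_dx_dt (hF : ContDiff ℝ 2 F) (p : ℝ × ℝ) : dt (dx F) p = dx (dt F) p := by
  have hD : Differentiable ℝ (fderiv ℝ F) :=
    (hF.fderiv_right (m := 1) (by norm_num)).differentiable (by norm_num)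
  have key : ∀ v w, fderiv ℝ (fun q => fderiv ℝ F q v) p w = fderiv ℝ (fderiv ℝ F) p w v := by
    intro v w
    rw [fderiv_clm_apply (hD p) (differentiableAt_const v)]
    simp
  change fderiv ℝ (fun q => fderiv ℝ F q (0, 1)) p (1, 0)
    = fderiv ℝ (fun q => fderiv ℝ F q (1, 0)) p (0, 1)
  rw [key, key]
  exact hF.contDiffAt.isSymmSndFDerivAt (by simp) _ _

lemma hasDerivWithinAt_comp_backward (hF : Differentiable ℝ F) {X : ℝ → ℝ} {v s τ : ℝ}
    {S : Set ℝ} (hX : HasDerivWithinAt X v S τ) :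
    HasDerivWithinAt (fun σ => F (s - σ, X σ))
      (-dt F (s - τ, X τ) + v * dx F (s - τ, X τ)) S τ := by
  have hcurve : HasDerivWithinAt (fun σ => (s - σ, X σ)) ((-1 : ℝ), v) S τ :=
    ((hasDerivWithinAt_id τ S).const_sub s).prodMk hX
  have := (hF _).hasFDerivAt.comp_hasDerivWithinAt τ hcurve
  rwa [apply_pair_eq, neg_one_mul] at this

def clamp (K z : ℝ) : ℝ := max (-K) (min K z)

lemma lipschitzWith_clamp (K : ℝ) : LipschitzWith 1 (clamp K) :=
  (LipschitzWith.id.const_min K).const_max (-K)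

lemma abs_clamp_le {K : ℝ} (hK : 0 ≤ K) (z : ℝ) : |clamp K z| ≤ K :=
  abs_le.mpr ⟨le_max_left _ _, max_le (by linarith) (min_le_left _ _)⟩

lemma clamp_eq_self {K z : ℝ} (hz : |z| ≤ K) : clamp K z = z := by
  rw [clamp, min_eq_right (abs_le.mp hz).2, max_eq_right (abs_le.mp hz).1]

lemma exists_clamped_backward_characteristic (hU : ContDiff ℝ 1 U) {s : ℝ} (hs : 0 ≤ s)
    (y : ℝ) {K : ℝ} (hK : 0 ≤ K) :
    ∃ X : ℝ → ℝ, X 0 = y ∧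
      ∀ τ ∈ Icc 0 s, HasDerivWithinAt X (-clamp K (U (s - τ, X τ))) (Icc 0 s) τ := by
  obtain ⟨L, hL⟩ := hU.contDiffOn.exists_lipschitzOnWith one_ne_zero
    ((convex_Icc 0 s).prod (convex_closedBall y (K * s)))
    (isCompact_Icc.prod (isCompact_closedBall y (K * s)))
  have hlip : ∀ τ ∈ Icc 0 s, LipschitzOnWith L (fun x => -clamp K (U (s - τ, x)))
      (closedBall y (K * s)) := by
    intro τ hτ
    have hslice := hL.comp (LipschitzWith.prodMk_left (s - τ)).lipschitzOnWith
      (fun x hx => mk_mem_prod ⟨by linarith [hτ.2], by linarith [hτ.1]⟩ hx)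
    simpa [Function.comp_def] using
      (LipschitzWith.id.neg.comp (lipschitzWith_clamp K)).comp_lipschitzOnWith hslice
  have hpl : IsPicardLindelof (fun τ x => -clamp K (U (s - τ, x))) (tmin := 0) (tmax := s)
      ⟨0, le_rfl, hs⟩ y (K * s).toNNReal 0 K.toNNReal L := by
    refine ⟨?_, ?_, ?_, ?_⟩
    · simpa [Real.coe_toNNReal _ (mul_nonneg hK hs)] using hlip
    · intro x _
      exact ((lipschitzWith_clamp K).continuous.comp (hU.continuous.comp
        ((continuous_const.sub continuous_id).prodMk continuous_const))).neg.continuousOn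
    · intro τ _ x _
      simpa [Real.coe_toNNReal _ hK] using abs_clamp_le hK (U (s - τ, x))
    · simp [Real.coe_toNNReal _ hK, Real.coe_toNNReal _ (mul_nonneg hK hs), hs]
  exact hpl.exists_eq_forall_mem_Icc_hasDerivWithinAt₀

theorem exists_backward_characteristic (hU : ContDiff ℝ 1 U) {s : ℝ} (hs : 0 ≤ s) (y : ℝ)
    {C : ℝ} (hC : ∀ p : ℝ × ℝ, p.1 ∈ Icc 0 s → |materialDeriv U U p| ≤ C) :
    ∃ X : ℝ → ℝ, X 0 = y ∧
      ∀ τ ∈ Icc 0 s, HasDerivWithinAt X (-U (s - τ, X τ)) (Icc 0 s) τ := by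
  have hC0 : 0 ≤ C := (abs_nonneg _).trans (hC (s, y) ⟨hs, le_rfl⟩)
  set K := |U (s, y)| + (C + 1) * s + 1
  obtain ⟨X, hX0, hX⟩ := exists_clamped_backward_characteristic hU hs y (K := K) (by positivity)
  set G := fun σ => U (s - σ, X σ)
  have hG : ∀ σ ∈ Icc 0 s, HasDerivWithinAt G
      (-dt U (s - σ, X σ) + -clamp K (G σ) * dx U (s - σ, X σ)) (Icc 0 s) σ :=
    fun σ hσ => hasDerivWithinAt_comp_backward (hU.differentiable one_ne_zero) (hX σ hσ)
  have hmem : ∀ σ ∈ Icc 0 s, (s - σ, X σ).1 ∈ Icc 0 s := fun σ hσ =>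
    ⟨by linarith [hσ.2], by linarith [hσ.1]⟩
  have hG0 : G 0 = U (s, y) := by simp [G, hX0]
  -- Fencing by `|U (s, y)| + (C + 1) σ`, which stays below `K`, so the clamp never acts.
  have hGK : ∀ σ ∈ Icc 0 s, |G σ| ≤ K - 1 := by
    have hfence := image_norm_le_of_norm_deriv_right_lt_deriv_boundary
      (B := fun σ => |G 0| + (C + 1) * σ) (B' := fun _ => C + 1)
      (fun σ hσ => (hG σ hσ).continuousWithinAt)
      (fun σ hσ => (hG σ (Ico_subset_Icc_self hσ)).Ici_of_Icc hσ)
      (by simp) (fun σ => by simpa using ((hasDerivAt_id σ).const_mul (C + 1)).const_add |G 0|)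
      (by
        intro σ hσ hGσ
        have hclamp : clamp K (G σ) = G σ := clamp_eq_self (by
          simp only [Real.norm_eq_abs] at hGσ
          rw [hGσ, hG0]; nlinarith [hσ.2])
        have hderiv : -dt U (s - σ, X σ) + -clamp K (G σ) * dx U (s - σ, X σ)
            = -materialDeriv U U (s - σ, X σ) := by
          rw [hclamp, materialDeriv]; ring
        rw [hderiv, norm_neg, Real.norm_eq_abs]
        exact (hC _ (hmem σ (Ico_subset_Icc_self hσ))).trans_lt (lt_add_one C))
    intro σ hσ
    have := hfence hσ
    simp only [Real.norm_eq_abs] at this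
    rw [hG0] at this
    nlinarith [hσ.2]
  refine ⟨X, hX0, fun τ hτ => ?_⟩
  have := hX τ hτ
  rwa [clamp_eq_self (by linarith [hGK τ hτ])] at this

theorem le_add_mul_of_materialDeriv_le (hF : Differentiable ℝ F) {s M : ℝ} (hs : 0 ≤ s)
    {X : ℝ → ℝ} (hX : ∀ τ ∈ Icc 0 s, HasDerivWithinAt X (-U (s - τ, X τ)) (Icc 0 s) τ)
    (hM : ∀ p : ℝ × ℝ, p.1 ∈ Icc 0 s → materialDeriv U F p ≤ M) :
    F (s, X 0) ≤ F (0, X s) + M * s := by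
  have hW : ∀ τ ∈ Icc 0 s, HasDerivWithinAt (fun σ => F (s - σ, X σ))
      (-materialDeriv U F (s - τ, X τ)) (Icc 0 s) τ := by
    intro τ hτ
    convert hasDerivWithinAt_comp_backward hF (hX τ hτ) using 1
    rw [materialDeriv]; ring
  have hfence := image_le_of_deriv_right_le_deriv_boundary
    (f := fun σ => F (s - 0, X 0) - M * σ) (f' := fun _ => -M)
    (B := fun σ => F (s - σ, X σ)) (B' := fun τ => -materialDeriv U F (s - τ, X τ))
    (by fun_prop)
    (fun σ _ => by simpa using ((hasDerivAt_id σ).const_mul M).const_sub _ |>.hasDerivWithinAt)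
    (by simp) (fun σ hσ => (hW σ hσ).continuousWithinAt)
    (fun σ hσ => (hW σ (Ico_subset_Icc_self hσ)).Ici_of_Icc hσ)
    (fun σ hσ => neg_le_neg (hM _ ⟨by linarith [hσ.2], by linarith [hσ.1]⟩))
    (right_mem_Icc.mpr hs)
  simp only [sub_zero, sub_self] at hfence
  linarith

theorem exists_dx_le_add_mul (hU : ContDiff ℝ 2 U) {s C M : ℝ} (hs : 0 ≤ s)
    (hC : ∀ p : ℝ × ℝ, p.1 ∈ Icc 0 s → |materialDeriv U U p| ≤ C)
    (hM : ∀ p : ℝ × ℝ, p.1 ∈ Icc 0 s → materialDeriv U (dx U) p + dx U p ^ 2 ≤ M) (y : ℝ) :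
    ∃ x, dx U (s, y) ≤ dx U (0, x) + M * s := by
  obtain ⟨X, hX0, hX⟩ := exists_backward_characteristic (hU.of_le (by norm_num)) hs y hC
  refine ⟨X s, hX0 ▸ le_add_mul_of_materialDeriv_le ((contDiff_dx hU).differentiable one_ne_zero)
    hs hX fun p hp => ?_⟩
  linarith [hM p hp, sq_nonneg (dx U p)]

lemma materialDeriv_self_eq (hU : Differentiable ℝ U) {t : ℝ} {g : ℝ → ℝ}
    (hpde : ∀ y, deriv (fun r => U (r, y)) t + 1 / 2 * deriv (fun z => U (t, z) ^ 2) y = g y)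
    (y : ℝ) : materialDeriv U U (t, y) = g y := by
  rw [← hpde y, (hasDerivAt_dt (hU _)).deriv, ((hasDerivAt_dx (hU _)).fun_pow 2).deriv,
    materialDeriv]
  ring

lemma hasDerivAt_materialDeriv_self (hU : ContDiff ℝ 2 U) (t y : ℝ) :
    HasDerivAt (fun z => materialDeriv U U (t, z))
      (materialDeriv U (dx U) (t, y) + dx U (t, y) ^ 2) y := by
  have hdiff : ∀ {G : ℝ × ℝ → ℝ}, ContDiff ℝ 1 G → DifferentiableAt ℝ G (t, y) :=
    fun hG => hG.differentiable one_ne_zero _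
  refine ((hasDerivAt_dx (hdiff (contDiff_dt hU))).fun_add
    ((hasDerivAt_dx (hdiff (hU.of_le (by norm_num)))).fun_mul
      (hasDerivAt_dx (hdiff (contDiff_dx hU))))).congr_deriv ?_
  rw [materialDeriv, dt_dx_eq_dx_dt hU]; ring

end Burgers

end

open Burgers

theorem burgers_space_deriv_upper_bound_general (T : ℝ)
    (V : ℝ → ℝ → ℝ)
    (φ : ℝ → ℝ)
    (u : ℝ → ℝ → ℝ) (hu : ContDiff ℝ 2 fun p : ℝ × ℝ => u p.1 p.2)
    (hVbdd : ∃ C, ∀ s ∈ Set.Icc (0:ℝ) T, ∀ y,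
      |deriv (V s) y| + |deriv (deriv (V s)) y| ≤ C)
    (hφ''bdd : ∃ C, ∀ y, deriv (deriv φ) y ≤ C)
    (heq : ∀ s ∈ Set.Icc (0:ℝ) T, ∀ y,
      deriv (fun r => u r y) s + (1 / 2) * deriv (fun z => (u s z) ^ 2) y = deriv (V s) y)
    (hinit : ∀ y, u 0 y = deriv φ y) :
    ∀ t ∈ Set.Icc (0:ℝ) T, ∀ s ∈ Set.Icc (0:ℝ) t, ∀ y,
      deriv (u s) y ≤ (⨆ z : ℝ, deriv (deriv φ) z)
        + t * ⨆ p : Set.Icc (0:ℝ) T × ℝ, deriv (deriv (V (p.1 : ℝ))) p.2 := by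
  intro t ht s hs y
  set U : ℝ × ℝ → ℝ := fun p => u p.1 p.2
  obtain ⟨C, hC⟩ := hVbdd
  obtain ⟨A, hA⟩ := hφ''bdd
  have hdx : ∀ r x, deriv (u r) x = dx U (r, x) := fun r x =>
    (hasDerivAt_dx (hu.differentiable two_ne_zero (r, x))).deriv
  have hVx : ∀ r ∈ Icc 0 T, deriv (V r) = fun x => materialDeriv U U (r, x) := fun r hr =>
    funext fun x => (materialDeriv_self_eq (hu.differentiable two_ne_zero) (heq r hr) x).symm
  have hVxx : ∀ r ∈ Icc 0 T, ∀ x,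
      HasDerivAt (deriv (V r)) (materialDeriv U (dx U) (r, x) + dx U (r, x) ^ 2) x :=
    fun r hr x => hVx r hr ▸ hasDerivAt_materialDeriv_self hu r x
  set M := ⨆ p : Icc (0:ℝ) T × ℝ, deriv (deriv (V p.1)) p.2
  have hM : ∀ r ∈ Icc 0 T, ∀ x, deriv (deriv (V r)) x ≤ M := fun r hr x =>
    le_ciSup (f := fun p : Icc (0:ℝ) T × ℝ => deriv (deriv (V p.1)) p.2)
      ⟨C, forall_mem_range.mpr fun p => (le_abs_self _).trans
        ((le_add_of_nonneg_left (abs_nonneg _)).trans (hC p.1 p.1.2 p.2))⟩ ⟨⟨r, hr⟩, x⟩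
  have hVxC : ∀ r ∈ Icc 0 T, ∀ x, |deriv (V r) x| ≤ C := fun r hr x =>
    (le_add_of_nonneg_right (abs_nonneg _)).trans (hC r hr x)
  have h0T : (0 : ℝ) ∈ Icc 0 T := ⟨le_rfl, ht.1.trans ht.2⟩
  have hM0 : 0 ≤ M := nonneg_of_abs_le_of_deriv_le
    (fun x => (hVxx 0 h0T x).differentiableAt) (hVxC 0 h0T) (hM 0 h0T)
  have hsT : Icc 0 s ⊆ Icc 0 T := Icc_subset_Icc_right (hs.2.trans ht.2)
  obtain ⟨x, hx⟩ := exists_dx_le_add_mul hu hs.1 (C := C) (M := M)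
    (fun p hp => by simpa [hVx p.1 (hsT hp)] using hVxC p.1 (hsT hp) p.2)
    (fun p hp => (hVxx p.1 (hsT hp) p.2).deriv ▸ hM p.1 (hsT hp) p.2) y
  calc deriv (u s) y ≤ deriv (deriv φ) x + M * s := by
        rwa [hdx, ← funext hinit, hdx]
    _ ≤ (⨆ z, deriv (deriv φ) z) + t * M :=
        add_le_add (le_ciSup ⟨A, forall_mem_range.mpr hA⟩ _)
          (by rw [mul_comm]; exact mul_le_mul_of_nonneg_right hs.2 hM0)

/-- **Upper bound on the space derivative of solutions of the forced inviscid Burgers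
equation.**  If `u` is a `C²` solution of `u_t + ½(u²)_x = V_x` on `[0,T] × ℝ` with
`u(0,·) = φ'`, where `V_x, V_xx` are uniformly bounded, `φ''` is bounded above and `φ'`
is bounded, then `u_x(s,x) ≤ sup_y φ''(y) + t · sup_{(r,y) ∈ [0,T]×ℝ} V_xx(r,y)` for all
`0 ≤ s ≤ t ≤ T`. -/
theorem burgers_space_deriv_upper_bound (T : ℝ) (hT : 0 < T)
    (V : ℝ → ℝ → ℝ) (hV : ContDiff ℝ 2 fun p : ℝ × ℝ => V p.1 p.2)
    (φ : ℝ → ℝ) (hφ : ContDiff ℝ 2 φ)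
    (u : ℝ → ℝ → ℝ) (hu : ContDiff ℝ 2 fun p : ℝ × ℝ => u p.1 p.2)
    (hVbdd : ∃ C, ∀ s ∈ Set.Icc (0:ℝ) T, ∀ y,
      |deriv (V s) y| + |deriv (deriv (V s)) y| ≤ C)
    (hφ''bdd : ∃ C, ∀ y, deriv (deriv φ) y ≤ C)
    (hφ'bdd : ∃ C, ∀ y, |deriv φ y| ≤ C)
    (heq : ∀ s ∈ Set.Icc (0:ℝ) T, ∀ y,
      deriv (fun r => u r y) s + (1 / 2) * deriv (fun z => (u s z) ^ 2) y = deriv (V s) y)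
    (hinit : ∀ y, u 0 y = deriv φ y) :
    ∀ t ∈ Set.Icc (0:ℝ) T, ∀ s ∈ Set.Icc (0:ℝ) t, ∀ y,
      deriv (u s) y ≤ (⨆ z : ℝ, deriv (deriv φ) z)
        + t * ⨆ p : Set.Icc (0:ℝ) T × ℝ, deriv (deriv (V (p.1 : ℝ))) p.2 :=
  burgers_space_deriv_upper_bound_general T V φ u hu hVbdd hφ''bdd heq hinit
end

section
/- (The periodic Euler–Lagrange trajectory ξ(s) = −2nπ + s − sin s is not a minimiser.) Let n ≥ 1 be an integer, t = 2nπ, and let φ : ℝ → ℝ be any 2π-periodic function. For a piecewise continuously differentiable η : [0,t] → ℝ define the action A(η) = ½∫_0^t η'(s)² ds + ∫_0^t ( cos(sin s) − cos(η(s) + sin s) ) ds + φ(η(0)). Let ξ(s) = −2nπ + s − sin s and ψ(s) = 0 for all s ∈ [0,t]; both satisfy ξ(t) = ψ(t) = 0 and ξ'(0) = ψ'(0) = 0. Then A(ξ) = 3πn/2 + ∫_0^{2πn} cos(sin s) ds + φ(0), A(ψ) = φ(0), and A(ψ) < A(ξ). -/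
open Real

/-- **The periodic Euler–Lagrange trajectory `ξ(s) = −2nπ + s − sin s` is not a minimiser.**
For `t = 2nπ` (`n ≥ 1`), `2π`-periodic `φ`, and the action
`A(η) = ½∫₀ᵗ η'² + ∫₀ᵗ (cos(sin s) − cos(η(s) + sin s)) ds + φ(η(0))`, the trajectories
`ξ(s) = −2nπ + s − sin s` and `ψ ≡ 0` share the boundary data `ξ(t) = ψ(t) = 0`,
`ξ'(0) = ψ'(0) = 0`, yet `A(ξ) = 3πn/2 + ∫₀^{2πn} cos(sin s) ds + φ(0)`, `A(ψ) = φ(0)`,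
and `A(ψ) < A(ξ)`. -/
theorem periodic_trajectory_not_minimiser_even
    (n : ℕ) (hn : 1 ≤ n)
    (φ : ℝ → ℝ) (hφ : ∀ y, φ (y + 2 * π) = φ y)
    (t : ℝ) (ht : t = 2 * n * π)
    (A : (ℝ → ℝ) → ℝ)
    (hA : ∀ η : ℝ → ℝ, A η = (1 / 2) * (∫ s in (0:ℝ)..t, (deriv η s) ^ 2)
        + (∫ s in (0:ℝ)..t, (Real.cos (Real.sin s) - Real.cos (η s + Real.sin s)))
        + φ (η 0))
    (ξ ψ : ℝ → ℝ)
    (hξ : ∀ s, ξ s = -(2 * n * π) + s - Real.sin s)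
    (hψ : ∀ s, ψ s = 0) :
    ξ t = 0 ∧ ψ t = 0 ∧ deriv ξ 0 = 0 ∧ deriv ψ 0 = 0 ∧
    A ξ = 3 * π * n / 2 + (∫ s in (0:ℝ)..(2 * π * n), Real.cos (Real.sin s)) + φ 0 ∧
    A ψ = φ 0 ∧
    A ψ < A ξ := by
  have hξf : ξ = fun s => -(2 * n * π) + s - Real.sin s := funext hξ
  have hψf : ψ = fun _ => (0 : ℝ) := funext hψ
  have hsin : Real.sin t = 0 := by
    rw [ht]
    have : (2 : ℝ) * n * π = ((2 * n : ℕ) : ℝ) * π := by push_cast; ring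
    rw [this, Real.sin_nat_mul_pi]
  -- derivative of ξ
  have hderξ : ∀ s, deriv ξ s = 1 - Real.cos s := by
    intro s
    have h : HasDerivAt ξ (1 - Real.cos s) s := by
      rw [hξf]
      exact ((hasDerivAt_id s).const_add (-(2 * n * π))).sub (Real.hasDerivAt_sin s)
    exact h.deriv
  have hderψ : ∀ s, deriv ψ s = 0 := by
    intro s; rw [hψf]; simp
  -- φ periodicity iterated
  have hφn : ∀ m : ℕ, φ (-(2 * m * π)) = φ 0 := by
    intro m
    induction m with
    | zero => norm_num
    | succ k ih =>
        have : (-(2 * (k + 1 : ℕ) * π) : ℝ) + 2 * π = -(2 * k * π) := by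
          push_cast; ring
        calc φ (-(2 * (k + 1 : ℕ) * π)) = φ ((-(2 * (k + 1 : ℕ) * π)) + 2 * π) :=
              (hφ _).symm
          _ = φ (-(2 * k * π)) := by rw [this]
          _ = φ 0 := ih
  -- cos (ξ s + sin s) = cos s
  have hcos : ∀ s, Real.cos (ξ s + Real.sin s) = Real.cos s := by
    intro s
    have h1 : ξ s + Real.sin s = s + -(n:ℝ) * (2 * π) := by
      rw [hξ]; ring
    have h2 := Real.cos_add_int_mul_two_pi s (-(n:ℤ))
    push_cast at h2
    rw [h1]; exact h2
  -- value at 0 of ξ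
  have hξ0 : ξ 0 = -(2 * n * π) := by rw [hξ]; simp
  -- main integral computations
  have hI1 : (∫ s in (0:ℝ)..t, (deriv ξ s) ^ 2) = 3 * π * n := by
    have heq : ∀ s ∈ Set.uIcc (0:ℝ) t, (deriv ξ s) ^ 2 =
        1 - 2 * Real.cos s + Real.cos s ^ 2 := by
      intro s _; rw [hderξ]; ring
    rw [intervalIntegral.integral_congr heq]
    have hInt1 : IntervalIntegrable (fun _ : ℝ => (1:ℝ)) MeasureTheory.volume 0 t :=
      intervalIntegrable_const
    have hInt2 : IntervalIntegrable (fun s : ℝ => 2 * Real.cos s) MeasureTheory.volume 0 t :=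
      (continuous_const.mul Real.continuous_cos).intervalIntegrable _ _
    have hInt3 : IntervalIntegrable (fun s : ℝ => Real.cos s ^ 2) MeasureTheory.volume 0 t :=
      (Real.continuous_cos.pow 2).intervalIntegrable _ _
    rw [intervalIntegral.integral_add (hInt1.sub hInt2) hInt3,
      intervalIntegral.integral_sub hInt1 hInt2,
      intervalIntegral.integral_const,
      intervalIntegral.integral_const_mul, integral_cos, integral_cos_sq,
      hsin, ht]
    simp
    ring
  have hI2 : (∫ s in (0:ℝ)..t, (Real.cos (Real.sin s) - Real.cos (ξ s + Real.sin s)))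
      = ∫ s in (0:ℝ)..(2 * π * n), Real.cos (Real.sin s) := by
    have heq : ∀ s ∈ Set.uIcc (0:ℝ) t,
        Real.cos (Real.sin s) - Real.cos (ξ s + Real.sin s)
          = Real.cos (Real.sin s) - Real.cos s := by
      intro s _; rw [hcos]
    rw [intervalIntegral.integral_congr heq]
    have hInt1 : IntervalIntegrable (fun s : ℝ => Real.cos (Real.sin s))
        MeasureTheory.volume 0 t :=
      (Real.continuous_cos.comp Real.continuous_sin).intervalIntegrable _ _
    have hInt2 : IntervalIntegrable (fun s : ℝ => Real.cos s) MeasureTheory.volume 0 t :=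
      Real.continuous_cos.intervalIntegrable _ _
    rw [intervalIntegral.integral_sub hInt1 hInt2, integral_cos, hsin]
    have htt : t = 2 * π * n := by rw [ht]; ring
    rw [htt]; simp
  have hAξ : A ξ = 3 * π * n / 2 + (∫ s in (0:ℝ)..(2 * π * n), Real.cos (Real.sin s)) + φ 0 := by
    rw [hA, hI1, hI2, hξ0, hφn]
    ring
  have hAψ : A ψ = φ 0 := by
    rw [hA]
    have h1 : (∫ s in (0:ℝ)..t, (deriv ψ s) ^ 2) = 0 := by
      have : ∀ s ∈ Set.uIcc (0:ℝ) t, (deriv ψ s) ^ 2 = 0 := by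
        intro s _; rw [hderψ]; ring
      rw [intervalIntegral.integral_congr this]; simp
    have h2 : (∫ s in (0:ℝ)..t, (Real.cos (Real.sin s) - Real.cos (ψ s + Real.sin s))) = 0 := by
      have : ∀ s ∈ Set.uIcc (0:ℝ) t,
          Real.cos (Real.sin s) - Real.cos (ψ s + Real.sin s) = 0 := by
        intro s _; rw [hψ]; ring_nf
      rw [intervalIntegral.integral_congr this]; simp
    rw [h1, h2, hψ]
    ring
  refine ⟨?_, ?_, ?_, ?_, hAξ, hAψ, ?_⟩
  · rw [hξ, ht]
    have : Real.sin (2 * n * π) = 0 := by rw [← ht]; exact hsin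
    rw [this]; ring
  · exact hψ t
  · rw [hderξ]; simp
  · exact hderψ 0
  · rw [hAξ, hAψ]
    have hπ : (0:ℝ) < π := Real.pi_pos
    have hn' : (1:ℝ) ≤ n := by exact_mod_cast hn
    have h1 : (0:ℝ) < 3 * π * n / 2 := by positivity
    have h2 : (0:ℝ) ≤ ∫ s in (0:ℝ)..(2 * π * n), Real.cos (Real.sin s) := by
      apply intervalIntegral.integral_nonneg
      · positivity
      · intro s _
        apply Real.cos_nonneg_of_mem_Icc
        constructor
        · have := Real.neg_one_le_sin s
          nlinarith [Real.pi_gt_three]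
        · have := Real.sin_le_one s
          nlinarith [Real.pi_gt_three]
    linarith
end

section
/- (The periodic Euler–Lagrange trajectory ξ(s) = (2n+1)π − s − sin s is not a minimiser.) Let n ≥ 1 be an integer, t = (2n+1)π, and let φ : ℝ → ℝ be any 2π-periodic function. For a piecewise continuously differentiable η : [0,t] → ℝ define the action A(η) = ½∫_0^t η'(s)² ds + ∫_0^t ( cos(sin s) − cos(η(s) + sin s) ) ds + φ(η(0)). Let ξ(s) = (2n+1)π − s − sin s, and let ψ(s) = π − 2s for 0 ≤ s ≤ π/2 and ψ(s) = 0 for π/2 < s ≤ t; both satisfy ξ(t) = ψ(t) = 0 and ξ'(0) = ψ'(0) = −2. Then A(ξ) = (6n+3)π/4 + ∫_0^{(2n+1)π} cos(sin s) ds + φ(π), A(ψ) ≤ 2π + φ(π), and A(ψ) < A(ξ). -/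
/-!
Along `ξ` one has `ξ(s) + sin s = t − s`, so its potential is `cos(sin s) + cos s` and both
integrals in `A(ξ)` are elementary; as `cos(sin s) > 0`, `A(ξ) ≥ 3t/4 + φ(π) ≥ 9π/4 + φ(π)`.
The competitor `ψ` slides down to `0` by time `π/2` and then rests where the potential vanishes,
so it pays kinetic energy `½·4·π/2 = π` and potential at most `2·π/2 = π`.
-/

open Real MeasureTheory

theorem hasDerivAt_const_sub_sub_sin (c s : ℝ) :
    HasDerivAt (fun u => c - u - sin u) (-1 - cos s) s :=
  ((hasDerivAt_id' s).const_sub c).sub (hasDerivAt_sin s)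

theorem integral_neg_one_sub_cos_sq (a : ℝ) :
    ∫ s in (0:ℝ)..a, (-1 - cos s) ^ 2 = 3 * a / 2 + 2 * sin a + sin a * cos a / 2 := by
  have hexpand : (fun s => (-1 - cos s) ^ 2) = fun s => (1 + 2 * cos s) + cos s ^ 2 := by
    ext s; ring
  have h1 : IntervalIntegrable (fun _ : ℝ => (1:ℝ)) volume 0 a := intervalIntegrable_const
  have h2 : IntervalIntegrable (fun s => 2 * cos s) volume 0 a :=
    (continuous_cos.const_smul (2:ℝ)).intervalIntegrable _ _
  have h3 : IntervalIntegrable (fun s => cos s ^ 2) volume 0 a :=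
    (continuous_cos.pow 2).intervalIntegrable _ _
  rw [hexpand, intervalIntegral.integral_add (h1.add h2) h3, intervalIntegral.integral_add h1 h2,
    intervalIntegral.integral_const_mul, integral_cos, integral_cos_sq]
  simp only [intervalIntegral.integral_const, sin_zero, cos_zero, smul_eq_mul]
  ring

theorem integral_cos_sin_sub_cos_sub (a : ℝ) :
    ∫ s in (0:ℝ)..a, (cos (sin s) - cos (a - s)) =
      (∫ s in (0:ℝ)..a, cos (sin s)) - sin a := by
  have hcs : Continuous fun s => cos (sin s) := by fun_prop
  have hcd : Continuous fun s => cos (a - s) := by fun_prop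
  rw [intervalIntegral.integral_sub (hcs.intervalIntegrable _ _) (hcd.intervalIntegrable _ _),
    intervalIntegral.integral_comp_sub_left (fun s => cos s), integral_cos]
  simp

theorem cos_sin_pos (s : ℝ) : 0 < cos (sin s) := by
  apply cos_pos_of_mem_Ioo
  constructor <;> linarith [neg_one_le_sin s, sin_le_one s, pi_gt_three]

theorem integral_cos_sin_nonneg {a : ℝ} (ha : 0 ≤ a) : 0 ≤ ∫ s in (0:ℝ)..a, cos (sin s) :=
  intervalIntegral.integral_nonneg ha fun s _ => (cos_sin_pos s).le

section Hinge

variable {g : ℝ → ℝ} {b k : ℝ}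

theorem deriv_ite_le_of_lt {s : ℝ} (hs : s < b) :
    deriv (fun u => if u ≤ b then g u else k) s = deriv g s := by
  refine Filter.EventuallyEq.deriv_eq ?_
  filter_upwards [Iio_mem_nhds hs] with u hu
  exact if_pos (le_of_lt hu)

theorem deriv_ite_le_of_gt {s : ℝ} (hs : b < s) :
    deriv (fun u => if u ≤ b then g u else k) s = 0 := by
  rw [Filter.EventuallyEq.deriv_eq (f := fun _ => k), deriv_const]
  filter_upwards [Ioi_mem_nhds hs] with u hu
  exact if_neg (not_le.mpr hu)

theorem continuous_ite_le (hg : Continuous g) (hgb : g b = k) :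
    Continuous fun u => if u ≤ b then g u else k :=
  continuous_if_le continuous_id continuous_const hg.continuousOn continuousOn_const
    fun _ hu => hu ▸ hgb

end Hinge

theorem integral_deriv_sq_of_deriv_eq {f : ℝ → ℝ} {b c T : ℝ} (hb : 0 ≤ b) (hbT : b ≤ T)
    (hl : ∀ s < b, deriv f s = c) (hr : ∀ s > b, deriv f s = 0) :
    ∫ s in (0:ℝ)..T, deriv f s ^ 2 = c ^ 2 * b := by
  have hne : ∀ᵐ s : ℝ, s ≠ b := by simp [ae_iff, measure_singleton]
  have hleft : ∀ᵐ s : ℝ, s ∈ Set.uIoc 0 b → deriv f s ^ 2 = c ^ 2 := by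
    filter_upwards [hne] with s hsb hs
    rw [Set.uIoc_of_le hb] at hs
    rw [hl s (lt_of_le_of_ne hs.2 hsb)]
  have hright : ∀ s ∈ Set.uIoc b T, deriv f s ^ 2 = 0 := by
    intro s hs
    rw [Set.uIoc_of_le hbT] at hs
    rw [hr s hs.1, sq, zero_mul]
  have ileft : IntervalIntegrable (fun s => deriv f s ^ 2) volume 0 b :=
    intervalIntegrable_const.congr_ae
      ((ae_restrict_iff' measurableSet_uIoc).mpr (hleft.mono fun s h hs => (h hs).symm))
  have iright : IntervalIntegrable (fun s => deriv f s ^ 2) volume b T :=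
    intervalIntegrable_const.congr_ae
      ((ae_restrict_iff' measurableSet_uIoc).mpr (.of_forall fun s hs => (hright s hs).symm))
  rw [← intervalIntegral.integral_add_adjacent_intervals ileft iright,
    intervalIntegral.integral_congr_ae hleft,
    intervalIntegral.integral_congr_ae (.of_forall hright)]
  simp [mul_comm]

theorem integral_cos_sin_sub_cos_add_sin_le {η : ℝ → ℝ} {b T : ℝ} (hη : Continuous η)
    (hb : 0 ≤ b) (hbT : b ≤ T) (hη0 : ∀ s ∈ Set.Icc b T, η s = 0) :
    ∫ s in (0:ℝ)..T, (cos (sin s) - cos (η s + sin s)) ≤ 2 * b := by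
  have hcont : Continuous fun s => cos (sin s) - cos (η s + sin s) := by fun_prop
  have hvanish : ∫ s in b..T, (cos (sin s) - cos (η s + sin s)) = 0 := by
    rw [intervalIntegral.integral_congr (g := fun _ => 0), intervalIntegral.integral_zero]
    intro s hs
    rw [Set.uIcc_of_le hbT] at hs
    simp [hη0 s hs]
  have hbound :
      ∫ s in (0:ℝ)..b, (cos (sin s) - cos (η s + sin s)) ≤ ∫ s in (0:ℝ)..b, (2:ℝ) :=
    intervalIntegral.integral_mono_on hb (hcont.intervalIntegrable _ _) intervalIntegrable_const
      fun s _ => by linarith [cos_le_one (sin s), neg_one_le_cos (η s + sin s)]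
  rw [← intervalIntegral.integral_add_adjacent_intervals (hcont.intervalIntegrable 0 b)
    (hcont.intervalIntegrable b T), hvanish, add_zero]
  simpa [mul_comm] using hbound

/-- **The periodic Euler–Lagrange trajectory `ξ(s) = (2n+1)π − s − sin s` is not a
minimiser.**  For `t = (2n+1)π` (`n ≥ 1`), `2π`-periodic `φ`, and the action
`A(η) = ½∫₀ᵗ η'² + ∫₀ᵗ (cos(sin s) − cos(η(s) + sin s)) ds + φ(η(0))`, the trajectories
`ξ(s) = (2n+1)π − s − sin s` and `ψ(s) = (π − 2s)·1_{s ≤ π/2}` share the boundary data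
`ξ(t) = ψ(t) = 0`, `ξ'(0) = ψ'(0) = −2`, yet
`A(ξ) = (6n+3)π/4 + ∫₀^{(2n+1)π} cos(sin s) ds + φ(π)`, `A(ψ) ≤ 2π + φ(π)`, and
`A(ψ) < A(ξ)`. -/
theorem periodic_trajectory_not_minimiser_odd
    (n : ℕ) (hn : 1 ≤ n)
    (φ : ℝ → ℝ) (hφ : ∀ y, φ (y + 2 * π) = φ y)
    (t : ℝ) (ht : t = (2 * n + 1) * π)
    (A : (ℝ → ℝ) → ℝ)
    (hA : ∀ η : ℝ → ℝ, A η = (1 / 2) * (∫ s in (0:ℝ)..t, (deriv η s) ^ 2)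
        + (∫ s in (0:ℝ)..t, (Real.cos (Real.sin s) - Real.cos (η s + Real.sin s)))
        + φ (η 0))
    (ξ ψ : ℝ → ℝ)
    (hξ : ∀ s, ξ s = (2 * n + 1) * π - s - Real.sin s)
    (hψ : ∀ s, ψ s = if s ≤ π / 2 then π - 2 * s else 0) :
    ξ t = 0 ∧ ψ t = 0 ∧ deriv ξ 0 = -2 ∧ deriv ψ 0 = -2 ∧
    A ξ = (6 * n + 3) * π / 4
        + (∫ s in (0:ℝ)..((2 * n + 1) * π), Real.cos (Real.sin s)) + φ π ∧
    A ψ ≤ 2 * π + φ π ∧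
    A ψ < A ξ := by
  subst ht
  have hn' : (1:ℝ) ≤ n := by exact_mod_cast hn
  have hπt : π / 2 < (2 * n + 1) * π := by nlinarith [pi_pos]
  have hsin : sin ((2 * n + 1) * π) = 0 := by exact_mod_cast sin_nat_mul_pi (2 * n + 1)
  have hφπ : φ ((2 * n + 1) * π) = φ π := by
    rw [show (2 * n + 1) * π = π + n * (2 * π) by ring]
    exact Function.Periodic.nat_mul hφ n π
  have hderivξ : deriv ξ = fun s => -1 - cos s := by
    rw [funext hξ]
    exact funext fun s => (hasDerivAt_const_sub_sub_sin _ s).deriv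
  have hderivψ : ∀ s < π / 2, deriv ψ s = -2 := fun s hs => by
    simp [funext hψ, deriv_ite_le_of_lt hs]
  have hAξ : A ξ = (6 * n + 3) * π / 4
      + (∫ s in (0:ℝ)..((2 * n + 1) * π), cos (sin s)) + φ π := by
    simp only [hA, hderivξ, integral_neg_one_sub_cos_sq, hξ, sub_add_cancel,
      integral_cos_sin_sub_cos_sub, hsin, sin_zero, sub_zero, hφπ]
    ring
  have hAψ : A ψ ≤ 2 * π + φ π := by
    have hψc : Continuous ψ :=
      funext hψ ▸ continuous_ite_le (g := fun s => π - 2 * s) (by fun_prop) (by ring)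
    have hpot := integral_cos_sin_sub_cos_add_sin_le hψc (by positivity) hπt.le
      fun s hs => by rw [hψ]; split_ifs <;> linarith [hs.1]
    rw [hA, integral_deriv_sq_of_deriv_eq (by positivity) hπt.le hderivψ
      fun s hs => by simp [funext hψ, deriv_ite_le_of_gt hs],
      hψ, if_pos (by positivity), mul_zero, sub_zero]
    linarith
  refine ⟨by simp [hξ, hsin], by simp [hψ, hπt], by norm_num [hderivξ],
    hderivψ 0 (by positivity), hAξ, hAψ, ?_⟩
  nlinarith [integral_cos_sin_nonneg (a := (2 * n + 1) * π) (by positivity), pi_pos]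
end
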